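/- arXiv:2104.13072 — 10 statements merged into one kernel-verified Lean document; each statement's English description precedes it below -/
import Mathlib

section
/- Let q be a power of a prime p and let F_q be the finite field with q elements. Let (a_n)_{n ≥ 0} be a sequence with values in F_q. Then the formal power series ∑_{n ≥ 0} a_n X^{q^n} ∈ F_q[[X]] is algebraic over the field of rational functions F_q(X) (equivalently, algebraic over the polynomial ring F_q[X]) if and only if the sequence (a_n)_{n ≥ 0} is eventually periodic. -/
open PowerSeries Classical in
/-- The power series `∑ b t * X^(q^t)`. -/
noncomputable def qSer {F : Type*} [Semiring F] (q : ℕ) (b : ℕ → F) : PowerSeries F :=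
  PowerSeries.mk fun j => if h : ∃ t, q ^ t = j then b h.choose else 0

open PowerSeries

lemma qSer_coeff_pow {F : Type*} [Semiring F] {q : ℕ} (hq2 : 2 ≤ q) (b : ℕ → F) (t : ℕ) :
    PowerSeries.coeff (q ^ t) (qSer q b) = b t := by
  have h : ∃ s, q ^ s = q ^ t := ⟨t, rfl⟩
  have ht : h.choose = t := Nat.pow_right_injective hq2 h.choose_spec
  rw [qSer, coeff_mk, dif_pos h, ht]

lemma qSer_coeff_eq_zero {F : Type*} [Semiring F] {q : ℕ} (b : ℕ → F) {j : ℕ}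
    (h : ∀ t, q ^ t ≠ j) : PowerSeries.coeff j (qSer q b) = 0 := by
  have h' : ¬ ∃ t, q ^ t = j := by push_neg; exact h
  rw [qSer, coeff_mk, dif_neg h']

instance charP_powerSeries {R : Type*} [CommRing R] (p : ℕ) [CharP R p] :
    CharP (PowerSeries R) p :=
  charP_of_injective_ringHom (f := PowerSeries.C)
    (fun a b hab => by simpa using congrArg (PowerSeries.constantCoeff) hab) p

/-- Frobenius coefficient formula for power series. -/
lemma coeff_pow_char' {R : Type*} [CommRing R] (p : ℕ) [hp : Fact p.Prime] [CharP R p]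
    (f : PowerSeries R) (k : ℕ) :
    PowerSeries.coeff k (f ^ p) = if p ∣ k then (PowerSeries.coeff (k / p) f) ^ p else 0 := by
  classical
  set T : Polynomial R := f.trunc (k + 1) with hT
  set r : PowerSeries R := f - (T : PowerSeries R) with hr
  have hsplit : f = (T : PowerSeries R) + r := by rw [hr]; ring
  have hdvd : (X : PowerSeries R) ^ (k + 1) ∣ r := by
    rw [PowerSeries.X_pow_dvd_iff]
    intro m hm
    simp [hr, map_sub, Polynomial.coeff_coe, hT, coeff_trunc, hm]
  have hpow : f ^ p = (T : PowerSeries R) ^ p + r ^ p := by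
    conv_lhs => rw [hsplit]
    exact add_pow_char _ _ _
  have hzero : PowerSeries.coeff k (r ^ p) = 0 := by
    obtain ⟨g, hg⟩ := hdvd
    have hrp : r ^ p = X ^ ((k+1) * p) * g ^ p := by rw [hg, mul_pow, ← pow_mul]
    rw [hrp, PowerSeries.coeff_X_pow_mul']
    have hnle : ¬ (k + 1) * p ≤ k := by
      have := hp.out.one_lt
      nlinarith
    simp [hnle]
  have hTp : PowerSeries.coeff k ((T : PowerSeries R) ^ p) =
      if p ∣ k then (T.coeff (k / p)) ^ p else 0 := by
    rw [← Polynomial.coe_pow, Polynomial.coeff_coe, ← Polynomial.map_frobenius_expand,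
      Polynomial.coeff_map, Polynomial.coeff_expand hp.out.pos]
    split_ifs with h
    · rfl
    · exact map_zero _
  rw [hpow, map_add, hzero, add_zero, hTp]
  have hdiv : k / p ≤ k := Nat.div_le_self _ _
  have hc : T.coeff (k / p) = PowerSeries.coeff (k / p) f := by
    rw [hT, coeff_trunc]
    simp [Nat.lt_succ_of_le hdiv]
  rw [hc]

lemma coeff_pow_char_pow {R : Type*} [CommRing R] (p : ℕ) [hp : Fact p.Prime] [CharP R p]
    (f : PowerSeries R) (m k : ℕ) :
    PowerSeries.coeff k (f ^ p ^ m) =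
      if p ^ m ∣ k then (PowerSeries.coeff (k / p ^ m) f) ^ p ^ m else 0 := by
  induction m generalizing k with
  | zero => simp
  | succ m ih =>
    have hfp : f ^ p ^ (m + 1) = (f ^ p ^ m) ^ p := by rw [← pow_mul, pow_succ]
    rw [hfp, coeff_pow_char' p, ih]
    by_cases hpk : p ∣ k
    · by_cases hmk : p ^ m ∣ k / p
      · have h1 : p ^ (m+1) ∣ k := by
          obtain ⟨u, hu⟩ := hpk
          obtain ⟨v, hv⟩ := hmk
          refine ⟨v, ?_⟩
          rw [hu] at hv ⊢
          rw [Nat.mul_div_cancel_left _ hp.out.pos] at hv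
          rw [hv, pow_succ]; ring
        rw [if_pos hpk, if_pos hmk, if_pos h1, ← pow_mul, ← pow_succ]
        rw [Nat.div_div_eq_div_mul, mul_comm p (p ^ m), ← pow_succ]
      · have h1 : ¬ p ^ (m+1) ∣ k := by
          intro ⟨v, hv⟩
          exact hmk ⟨v, by rw [hv, pow_succ, mul_comm (p^m) p, mul_assoc,
            Nat.mul_div_cancel_left _ hp.out.pos]⟩
        rw [if_pos hpk, if_neg hmk, if_neg h1, zero_pow hp.out.ne_zero]
    · have h1 : ¬ p ^ (m+1) ∣ k := fun h => hpk (dvd_trans (dvd_pow_self p (Nat.succ_ne_zero m)) h)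
      rw [if_neg hpk, if_neg h1]

/-- Shift of a sequence: `shiftSeq i b = (0,...,0, b 0, b 1, ...)` with `i` zeros. -/
def shiftSeq {F : Type*} (i : ℕ) (b : ℕ → F) [Zero F] : ℕ → F :=
  fun t => if t < i then 0 else b (t - i)

section Field

variable {F : Type*} [Field F] [Fintype F] {p m q : ℕ} [hp : Fact p.Prime] [CharP F p]
  (hq : q = p ^ m) (hm : 0 < m) (hF : Fintype.card F = q)

include hq hm hF

lemma hq2' : 2 ≤ q := by
  subst hq
  calc 2 ≤ p ^ 1 := by simpa using hp.out.two_le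
  _ ≤ p ^ m := Nat.pow_le_pow_right hp.out.pos hm

lemma qSer_pow_q (b : ℕ → F) : (qSer q b) ^ q = qSer q (shiftSeq 1 b) := by
  have hq2 : 2 ≤ q := hq2' hq hm hF
  ext j
  rw [hq, coeff_pow_char_pow, ← hq]
  by_cases hj : ∃ t, q ^ t = j
  · obtain ⟨t, rfl⟩ := hj
    cases t with
    | zero =>
      have h1 : ¬ q ∣ q ^ 0 := by
        simp only [pow_zero, Nat.dvd_one]
        omega
      rw [if_neg h1, qSer_coeff_pow hq2]
      simp [shiftSeq]
    | succ s =>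
      have h1 : q ∣ q ^ (s + 1) := dvd_pow_self q (Nat.succ_ne_zero s)
      rw [if_pos h1, qSer_coeff_pow hq2]
      have h2 : q ^ (s + 1) / q = q ^ s := by
        rw [pow_succ, Nat.mul_div_cancel]
        omega
      rw [h2, qSer_coeff_pow hq2]
      have h3 : shiftSeq 1 b (s + 1) = b s := by simp [shiftSeq]
      rw [h3, ← hF, FiniteField.pow_card]
  · push_neg at hj
    rw [qSer_coeff_eq_zero _ hj]
    by_cases h1 : q ∣ j
    · rw [if_pos h1]
      have h2 : ∀ t, q ^ t ≠ j / q := by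
        intro t ht
        exact hj (t + 1) (by rw [pow_succ, ht, mul_comm, Nat.mul_div_cancel' h1])
      rw [qSer_coeff_eq_zero _ h2, zero_pow (by omega)]
    · rw [if_neg h1]

lemma qSer_pow_q_pow (b : ℕ → F) (i : ℕ) :
    (qSer q b) ^ (q ^ i) = qSer q (shiftSeq i b) := by
  induction i with
  | zero =>
    have h : shiftSeq 0 b = b := by
      funext t
      show (if t < 0 then (0:F) else b (t - 0)) = b t
      simp
    rw [pow_zero, pow_one, h]
  | succ i ih =>
    rw [pow_succ, pow_mul, ih, qSer_pow_q hq hm hF]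
    have h : shiftSeq 1 (shiftSeq i b) = shiftSeq (i + 1) b := by
      funext t
      show (if t < 1 then (0:F) else (if t - 1 < i then 0 else b (t - 1 - i)))
          = if t < i + 1 then 0 else b (t - (i + 1))
      by_cases h0 : t < 1
      · rw [if_pos h0, if_pos (by omega)]
      · rw [if_neg h0]
        by_cases h1 : t - 1 < i
        · rw [if_pos h1, if_pos (by omega)]
        · rw [if_neg h1, if_neg (by omega)]
          congr 1
          omega
    rw [h]

end Field

/-- A sequence over a finite field satisfying a linear recurrence with constant
coefficients (valid from some point on) is eventually periodic. -/
lemma eventually_periodic_of_linear_recurrence {F : Type*} [Field F] [Fintype F]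
    (a : ℕ → F) (n M0 : ℕ) (w : ℕ → F)
    (hw : ∃ i, i ≤ n ∧ w i ≠ 0)
    (hrec : ∀ M ≥ M0, ∑ i ∈ Finset.range (n + 1), w i * a (M - i) = 0) :
    ∃ N P : ℕ, 0 < P ∧ ∀ n' ≥ N, a (n' + P) = a n' := by
  classical
  -- the least index with nonzero coefficient
  have hex : ∃ i, w i ≠ 0 := ⟨hw.choose, hw.choose_spec.2⟩
  set i0 := Nat.find hex with hi0def
  have hi0 : w i0 ≠ 0 := Nat.find_spec hex
  have hi0n : i0 ≤ n := le_trans (Nat.find_le hw.choose_spec.2) hw.choose_spec.1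
  have hmin : ∀ i < i0, w i = 0 := fun i hi => by
    by_contra h
    exact absurd (Nat.find_le h) (not_le.mpr hi)
  set r := n - i0 with hrdef
  -- solved form of the recurrence
  have hsolved : ∀ t ≥ M0, a (t + r) =
      -(w i0)⁻¹ * ∑ k ∈ Finset.range r, w (n - k) * a (t + k) := by
    intro t ht
    have h1 := hrec (t + n) (by omega)
    -- reindex
    have h2 : ∑ i ∈ Finset.range (n + 1), w i * a (t + n - i)
        = ∑ k ∈ Finset.range (n + 1), w (n - k) * a (t + k) := by
      rw [← Finset.sum_range_reflect]
      apply Finset.sum_congr rfl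
      intro k hk
      rw [Finset.mem_range] at hk
      congr 2 <;> omega
    have h2' : ∑ i ∈ Finset.range (n + 1), w i * a (t + n - i) = 0 := by
      have : ∀ i ∈ Finset.range (n+1), w i * a (t + n - i) = w i * a ((t+n) - i) := by
        intro i hi; rfl
      rw [Finset.sum_congr rfl this, h1]
    rw [h2'] at h2
    -- terms with k > r vanish
    have h3 : ∑ k ∈ Finset.range (n + 1), w (n - k) * a (t + k)
        = ∑ k ∈ Finset.range (r + 1), w (n - k) * a (t + k) := by
      symm
      apply Finset.sum_subset
      · intro x hx
        rw [Finset.mem_range] at hx ⊢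
        omega
      · intro x hx hx'
        rw [Finset.mem_range] at hx hx'
        have : w (n - x) = 0 := hmin _ (by omega)
        rw [this, zero_mul]
    rw [h3, Finset.sum_range_succ] at h2
    have h4 : n - r = i0 := by omega
    rw [h4] at h2
    have hS : w i0 * a (t + r) = -(∑ k ∈ Finset.range r, w (n - k) * a (t + k)) :=
      eq_neg_of_add_eq_zero_right h2.symm
    calc a (t + r) = (w i0)⁻¹ * (w i0 * a (t + r)) := by
          rw [← mul_assoc, inv_mul_cancel₀ hi0, one_mul]
    _ = (w i0)⁻¹ * -(∑ k ∈ Finset.range r, w (n - k) * a (t + k)) := by rw [hS]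
    _ = -(w i0)⁻¹ * ∑ k ∈ Finset.range r, w (n - k) * a (t + k) := by ring
  -- state vector dynamics
  set S := Fin (r + 1) → F with hS
  let s : ℕ → S := fun t k => a (t + k)
  let step : S → S := fun v k =>
    if h : (k : ℕ) < r then v ⟨k + 1, Nat.succ_lt_succ h⟩
    else -(w i0)⁻¹ * ∑ j : Fin r, w (n - (j : ℕ)) * v ⟨(j : ℕ) + 1, Nat.succ_lt_succ j.isLt⟩
  have hstep : ∀ t ≥ M0, s (t + 1) = step (s t) := by
    intro t ht
    funext k
    show a (t + 1 + k) = step (s t) k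
    by_cases h : (k : ℕ) < r
    · rw [show step (s t) k = s t ⟨k + 1, by omega⟩ from dif_pos h]
      show a (t + 1 + k) = a (t + (k + 1))
      congr 1; omega
    · have hk : (k : ℕ) = r := by omega
      rw [show step (s t) k = -(w i0)⁻¹ * ∑ j : Fin r,
        w (n - (j : ℕ)) * s t ⟨(j : ℕ) + 1, Nat.succ_lt_succ j.isLt⟩ from dif_neg h]
      have hsol := hsolved (t + 1) (by omega)
      have harg : t + 1 + (k : ℕ) = t + 1 + r := by omega
      rw [harg, hsol]
      congr 1
      rw [← Fin.sum_univ_eq_sum_range (fun j => w (n - j) * a (t + 1 + j)) r]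
      apply Finset.sum_congr rfl
      intro j _
      show w (n - (j : ℕ)) * a (t + 1 + (j : ℕ)) = w (n - (j : ℕ)) * a (t + ((j : ℕ) + 1))
      congr 2
      omega
  -- pigeonhole
  obtain ⟨t1, t2, hne, heq⟩ := Finite.exists_ne_map_eq_of_infinite (fun t : ℕ => s (M0 + t))
  wlog hlt : t1 < t2 generalizing t1 t2
  · exact this t2 t1 hne.symm heq.symm (by omega)
  set P := t2 - t1 with hP
  have hPpos : 0 < P := by omega
  have key : ∀ d, s (M0 + t1 + d) = s (M0 + t1 + d + P) := by
    intro d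
    induction d with
    | zero =>
      rw [Nat.add_zero, show M0 + t1 + P = M0 + t2 from by omega]
      exact heq
    | succ d ih =>
      have e2 : M0 + t1 + (d + 1) + P = (M0 + t1 + d + P) + 1 := by omega
      have e1 : M0 + t1 + (d + 1) = (M0 + t1 + d) + 1 := by omega
      rw [e2, e1, hstep _ (by omega), hstep _ (by omega), ih]
  refine ⟨M0 + t1, P, hPpos, fun n' hn' => ?_⟩
  have hd : n' = M0 + t1 + (n' - (M0 + t1)) := by omega
  have := key (n' - (M0 + t1))
  rw [← hd] at this
  have h0 : ∀ t, s t ⟨0, by omega⟩ = a t := fun t => by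
    show a (t + 0) = a t
    rw [Nat.add_zero]
  calc a (n' + P) = s (n' + P) ⟨0, by omega⟩ := (h0 _).symm
  _ = s n' ⟨0, by omega⟩ := by rw [← this]
  _ = a n' := h0 _

lemma eventually_periodic_of_qpow_relation {F : Type*} [Field F] [Fintype F] {p m q : ℕ}
    [hp : Fact p.Prime] [CharP F p]
    (hq : q = p ^ m) (hm : 0 < m) (hF : Fintype.card F = q)
    (a : ℕ → F) (n : ℕ) (c : ℕ → Polynomial F)
    (hex : ∃ i, i ≤ n ∧ c i ≠ 0)
    (hrel : ∑ i ∈ Finset.range (n + 1), ((c i : PowerSeries F) * (qSer q a) ^ q ^ i) = 0) :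
    ∃ N P : ℕ, 0 < P ∧ ∀ n' ≥ N, a (n' + P) = a n' := by
  classical
  have hq2 : 2 ≤ q := hq2' (F := F) hq hm hF
  have hEx : ∃ e, ∃ i, i ≤ n ∧ (c i).coeff e ≠ 0 := by
    obtain ⟨i, hin, hi⟩ := hex
    have h' : ∃ e, (c i).coeff e ≠ 0 := by
      by_contra h
      push_neg at h
      exact hi (Polynomial.ext fun k => by rw [h k, Polynomial.coeff_zero])
    obtain ⟨e, he⟩ := h'
    exact ⟨e, i, hin, he⟩
  set e := Nat.find hEx with hedef
  obtain ⟨i1, hi1n, hi1⟩ := Nat.find_spec hEx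
  have hemin : ∀ j < e, ∀ i ≤ n, (c i).coeff j = 0 := by
    intro j hj i hin
    have := Nat.find_min hEx hj
    push_neg at this
    exact this i hin
  set Dg := (Finset.range (n + 1)).sup fun i => (c i).natDegree with hDgdef
  have hDg : ∀ i ≤ n, (c i).natDegree ≤ Dg := by
    intro i hi
    apply Finset.le_sup (f := fun i => (c i).natDegree)
    rw [Finset.mem_range]
    omega
  set M0 := Dg + e + n + 2 with hM0def
  have harith : ∀ M ≥ M0, q ^ (M - 1) + Dg < q ^ M := by
    intro M hM
    have h1 : Dg < 2 ^ (M - 1) := by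
      have := Nat.lt_two_pow_self (n := M - 1)
      omega
    have h2 : (2:ℕ) ^ (M - 1) ≤ q ^ (M - 1) := Nat.pow_le_pow_left (by omega) _
    have h3 : q ^ M = q ^ (M - 1) * q := by
      rw [← pow_succ]
      congr 1
      omega
    nlinarith [pow_pos (show 0 < q by omega) (M - 1)]
  have hfpow : ∀ i : ℕ, (qSer q a) ^ q ^ i = qSer q (shiftSeq i a) :=
    fun i => qSer_pow_q_pow hq hm hF a i
  have hrec : ∀ M ≥ M0, ∑ i ∈ Finset.range (n + 1), (c i).coeff e * a (M - i) = 0 := by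
    intro M hM
    have h0 := congrArg (PowerSeries.coeff (q ^ M + e)) hrel
    rw [map_sum, map_zero] at h0
    rw [← h0]
    apply Finset.sum_congr rfl
    intro i hi
    rw [Finset.mem_range] at hi
    have hin : i ≤ n := by omega
    rw [hfpow i, PowerSeries.coeff_mul]
    rw [Finset.sum_eq_single_of_mem (e, q ^ M)
      (by rw [Finset.HasAntidiagonal.mem_antidiagonal]; omega)]
    · rw [Polynomial.coeff_coe, qSer_coeff_pow hq2]
      have : shiftSeq i a M = a (M - i) := by
        rw [shiftSeq, if_neg (by omega)]
      rw [this]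
    · rintro ⟨j, k⟩ hjk hne
      rw [Finset.HasAntidiagonal.mem_antidiagonal] at hjk
      simp only at hjk ⊢
      by_cases hcj : (c i).coeff j = 0
      · rw [Polynomial.coeff_coe, hcj, zero_mul]
      · have hje : e ≤ j := by
          by_contra h
          exact hcj (hemin j (by omega) i hin)
        have hjD : j ≤ Dg := by
          by_contra h
          exact hcj (Polynomial.coeff_eq_zero_of_natDegree_lt
            (lt_of_le_of_lt (hDg i hin) (by omega)))
        by_cases hk : ∃ s, q ^ s = k
        · obtain ⟨s, rfl⟩ := hk
          exfalso
          have ha1 := harith M hM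
          have hsM : s ≤ M := by
            have : q ^ s ≤ q ^ M := by omega
            exact (Nat.pow_le_pow_iff_right (by omega)).mp this
          have hsM1 : M - 1 < s := by
            have : q ^ (M - 1) < q ^ s := by omega
            exact (Nat.pow_lt_pow_iff_right (by omega)).mp this
          have hsEq : s = M := by omega
          subst hsEq
          have : j = e := by omega
          exact hne (by rw [this])
        · push_neg at hk
          rw [qSer_coeff_eq_zero _ hk, mul_zero]
  exact eventually_periodic_of_linear_recurrence a n M0 (fun i => (c i).coeff e)
    ⟨i1, hi1n, hi1⟩ hrec

lemma isAlgebraic_of_eventually_periodic {F : Type*} [Field F] [Fintype F] {p m q : ℕ}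
    [hp : Fact p.Prime] [CharP F p]
    (hq : q = p ^ m) (hm : 0 < m) (hF : Fintype.card F = q) (a : ℕ → F) (N P : ℕ)
    (hP : 0 < P) (hper : ∀ n ≥ N, a (n + P) = a n) :
    IsAlgebraic (Polynomial F) (qSer q a) := by
  classical
  have hq2 : 2 ≤ q := hq2' (F := F) hq hm hF
  set g : Polynomial F :=
    ∑ t ∈ Finset.range (N + P), Polynomial.monomial (q ^ t) (shiftSeq P a t - a t) with hgdef
  have hg : (g : PowerSeries F) = (qSer q a) ^ (q ^ P) - qSer q a := by
    ext j
    rw [Polynomial.coeff_coe, qSer_pow_q_pow hq hm hF, map_sub]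
    have hcg : g.coeff j = ∑ t ∈ Finset.range (N + P),
        if q ^ t = j then (shiftSeq P a t - a t) else 0 := by
      rw [hgdef, Polynomial.finset_sum_coeff]
      apply Finset.sum_congr rfl
      intro t _
      rw [Polynomial.coeff_monomial]
    rw [hcg]
    by_cases hj : ∃ t, q ^ t = j
    · obtain ⟨t0, rfl⟩ := hj
      rw [qSer_coeff_pow hq2, qSer_coeff_pow hq2]
      by_cases ht0 : t0 < N + P
      · rw [Finset.sum_eq_single t0]
        · rw [if_pos rfl]
        · intro t _ htne
          rw [if_neg (fun h => htne (Nat.pow_right_injective hq2 h))]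
        · intro h
          exact absurd (Finset.mem_range.mpr ht0) h
      · have hz : ∀ t ∈ Finset.range (N + P),
            (if q ^ t = q ^ t0 then (shiftSeq P a t - a t) else 0) = 0 := by
          intro t ht
          rw [Finset.mem_range] at ht
          have : q ^ t ≠ q ^ t0 := fun h => by
            have := Nat.pow_right_injective hq2 h
            omega
          rw [if_neg this]
        rw [Finset.sum_eq_zero hz]
        have h1 : shiftSeq P a t0 = a t0 := by
          rw [shiftSeq, if_neg (by omega)]
          have h2 := hper (t0 - P) (by omega)
          rw [show t0 - P + P = t0 from by omega] at h2
          exact h2.symm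
        rw [h1, sub_self]
    · push_neg at hj
      rw [qSer_coeff_eq_zero (shiftSeq P a) hj, qSer_coeff_eq_zero a hj, sub_zero]
      apply Finset.sum_eq_zero
      intro t _
      rw [if_neg (hj t)]
  refine ⟨Polynomial.X ^ (q ^ P) - Polynomial.X - Polynomial.C g, ?_, ?_⟩
  · intro h
    have hc := congrArg (fun T => Polynomial.coeff T (q ^ P)) h
    have hne1 : q ^ P ≠ 1 := by
      have : q ^ 1 ≤ q ^ P := Nat.pow_le_pow_right (by omega) hP
      simp only [pow_one] at this
      omega
    have hne0 : q ^ P ≠ 0 := by positivity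
    have hne1' : ¬ ((1:ℕ) = q ^ P) := fun h' => hne1 h'.symm
    simp only [Polynomial.coeff_sub, Polynomial.coeff_X_pow, if_pos rfl,
      Polynomial.coeff_X, Polynomial.coeff_C, if_neg hne0, if_neg hne1',
      Polynomial.coeff_zero] at hc
    norm_num at hc
  · have hAM : algebraMap (Polynomial F) (PowerSeries F) g = (g : PowerSeries F) := by
      rw [PowerSeries.algebraMap_apply']
      ext k
      rw [PowerSeries.coeff_map]
      simp
    rw [map_sub, map_sub, Polynomial.aeval_X, map_pow, Polynomial.aeval_X, Polynomial.aeval_C,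
      hAM, hg]
    ring

set_option synthInstance.maxHeartbeats 400000 in
set_option maxHeartbeats 1000000 in
open scoped RatFunc in
lemma exists_relation_of_isAlgebraic {F : Type*} [Field F] (q : ℕ) (f : PowerSeries F)
    (halg : IsAlgebraic (Polynomial F) f) :
    ∃ (n : ℕ) (c : ℕ → Polynomial F), (∃ i, i ≤ n ∧ c i ≠ 0) ∧
      ∑ i ∈ Finset.range (n + 1), ((c i : PowerSeries F) * f ^ q ^ i) = 0 := by
  classical
  set φ : PowerSeries F →ₐ[Polynomial F] LaurentSeries F :=
    { toRingHom := HahnSeries.ofPowerSeries ℤ F, commutes' := fun r => rfl } with hφdef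
  set fL : LaurentSeries F := φ f with hfLdef
  have halgL : IsAlgebraic (Polynomial F) fL := by
    obtain ⟨Q, hQne, hQ⟩ := halg
    exact ⟨Q, hQne, by rw [Polynomial.aeval_algHom_apply, hQ, map_zero]⟩
  have halgK : IsAlgebraic (RatFunc F) fL := by
    obtain ⟨Q, hQne, hQ⟩ := halgL
    refine ⟨Q.map (algebraMap (Polynomial F) (RatFunc F)), ?_, ?_⟩
    · exact Polynomial.map_ne_zero_iff
        (IsFractionRing.injective (Polynomial F) (RatFunc F)) |>.mpr hQne
    · rw [Polynomial.aeval_map_algebraMap, hQ]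
  have hint : IsIntegral (RatFunc F) fL := halgK.isIntegral
  set d := (minpoly (RatFunc F) fL).natDegree with hd
  set s : Finset (LaurentSeries F) := (Finset.range d).image (fL ^ ·) with hs
  set V : Submodule (RatFunc F) (LaurentSeries F) := Submodule.span (RatFunc F) (s : Set (LaurentSeries F))
    with hV
  have hmem : ∀ N : ℕ, fL ^ N ∈ V := by
    intro N
    rw [hV, hs, Submodule.span_range_natDegree_eq_adjoin (minpoly.monic hint)
      (minpoly.aeval _ _)]
    exact Subalgebra.pow_mem _ (Algebra.subset_adjoin (Set.mem_singleton fL)) N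
  set n := Module.finrank (RatFunc F) V with hn
  have hnd : n ≤ d := by
    rw [hn, hV]
    calc Module.finrank (RatFunc F) (Submodule.span (RatFunc F) (s : Set (LaurentSeries F)))
        ≤ s.card := finrank_span_finset_le_card s
    _ ≤ d := by
        rw [hs]
        exact le_trans (Finset.card_image_le) (by rw [Finset.card_range])
  set v : Fin (n + 1) → V := fun i => ⟨fL ^ q ^ (i : ℕ), hmem _⟩ with hv
  have hnotli : ¬ LinearIndependent (RatFunc F) v := by
    intro h
    have := h.fintype_card_le_finrank
    rw [Fintype.card_fin] at this
    omega
  obtain ⟨gg, hsum, i₀, hi₀⟩ := Fintype.not_linearIndependent_iff.mp hnotli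
  have hsum' : ∑ i : Fin (n + 1), gg i • (fL ^ q ^ (i : ℕ)) = 0 := by
    have h := congrArg (Subtype.val : V → LaurentSeries F) hsum
    push_cast at h
    simpa using h
  set D : Polynomial F := ∏ i : Fin (n + 1), (gg i).denom with hD
  have hDne : D ≠ 0 := Finset.prod_ne_zero_iff.mpr fun i _ => RatFunc.denom_ne_zero _
  set c : ℕ → Polynomial F := fun i =>
    if h : i < n + 1 then (gg ⟨i, h⟩).num * ∏ j ∈ Finset.univ.erase ⟨i, h⟩, (gg j).denom
    else 0 with hc
  have hcFin : ∀ i : Fin (n + 1),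
      c (i : ℕ) = (gg i).num * ∏ j ∈ Finset.univ.erase i, (gg j).denom := by
    intro i
    rw [hc]
    simp only [i.isLt, dif_pos, Fin.eta]
  have hkey : ∀ i : Fin (n + 1),
      algebraMap (Polynomial F) (RatFunc F) (c (i : ℕ)) = algebraMap (Polynomial F) (RatFunc F) D * gg i := by
    intro i
    have hden : algebraMap (Polynomial F) (RatFunc F) (gg i).denom ≠ 0 :=
      fun h => RatFunc.denom_ne_zero (gg i) (IsFractionRing.injective (Polynomial F) (RatFunc F)
        (by rw [h, map_zero]))
    have h1 : algebraMap (Polynomial F) (RatFunc F) (gg i).num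
        = gg i * algebraMap (Polynomial F) (RatFunc F) (gg i).denom :=
      (div_eq_iff hden).mp (RatFunc.num_div_denom (gg i))
    rw [hcFin i, map_mul, h1, hD, ← Finset.mul_prod_erase Finset.univ _ (Finset.mem_univ i),
      map_mul]
    ring
  have hrelL : ∑ i : Fin (n + 1),
      algebraMap (Polynomial F) (LaurentSeries F) (c (i : ℕ)) * fL ^ q ^ (i : ℕ) = 0 := by
    have : ∀ i : Fin (n + 1), algebraMap (Polynomial F) (LaurentSeries F) (c (i : ℕ))
        = algebraMap (RatFunc F) (LaurentSeries F) (algebraMap (Polynomial F) (RatFunc F) D) * algebraMap (RatFunc F) (LaurentSeries F) (gg i) := by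
      intro i
      rw [IsScalarTower.algebraMap_apply (Polynomial F) (RatFunc F) (LaurentSeries F), hkey i, map_mul]
    calc ∑ i : Fin (n + 1), algebraMap (Polynomial F) (LaurentSeries F) (c (i : ℕ)) * fL ^ q ^ (i : ℕ)
        = algebraMap (RatFunc F) (LaurentSeries F) (algebraMap (Polynomial F) (RatFunc F) D)
          * ∑ i : Fin (n + 1), gg i • (fL ^ q ^ (i : ℕ)) := by
          rw [Finset.mul_sum]
          apply Finset.sum_congr rfl
          intro i _
          rw [this i, Algebra.smul_def, mul_assoc]
    _ = 0 := by rw [hsum', mul_zero]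
  have hrelPS : ∑ i ∈ Finset.range (n + 1), ((c i : PowerSeries F) * f ^ q ^ i) = 0 := by
    apply HahnSeries.ofPowerSeries_injective (Γ := ℤ) (R := F)
    rw [map_sum, map_zero]
    have hgoal : ∑ i ∈ Finset.range (n + 1),
        (HahnSeries.ofPowerSeries ℤ F) ((c i : PowerSeries F) * f ^ q ^ i) = 0 := by
      rw [← Fin.sum_univ_eq_sum_range
        (fun i => (HahnSeries.ofPowerSeries ℤ F) ((c i : PowerSeries F) * f ^ q ^ i)) (n + 1),
        ← hrelL]
      apply Finset.sum_congr rfl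
      intro i _
      rw [map_mul, map_pow]
      rfl
    exact hgoal
  have hcne : ∃ i, i ≤ n ∧ c i ≠ 0 := by
    refine ⟨(i₀ : ℕ), by omega, ?_⟩
    intro h0
    have h1 := hkey i₀
    rw [h0, map_zero] at h1
    have hDK : algebraMap (Polynomial F) (RatFunc F) D ≠ 0 :=
      fun h => hDne (IsFractionRing.injective (Polynomial F) (RatFunc F) (by rw [h, map_zero]))
    exact hi₀ ((mul_eq_zero.mp h1.symm).resolve_left hDK)
  exact ⟨n, c, hcne, hrelPS⟩

theorem powerSeries_sum_a_X_pow_q_pow_algebraic_iff_eventually_periodic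
    (p : ℕ) (hp : p.Prime) (m : ℕ) (hm : 0 < m)
    {F : Type*} [Field F] [Fintype F] (q : ℕ) (hq : q = p ^ m)
    (hF : Fintype.card F = q)
    (a : ℕ → F) (f : PowerSeries F)
    (hf1 : ∀ n : ℕ, PowerSeries.coeff (q ^ n) f = a n)
    (hf2 : ∀ j : ℕ, (∀ n : ℕ, q ^ n ≠ j) → PowerSeries.coeff j f = 0) :
    IsAlgebraic (Polynomial F) f ↔
      ∃ N P : ℕ, 0 < P ∧ ∀ n ≥ N, a (n + P) = a n := by
  haveI hpF : Fact p.Prime := ⟨hp⟩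
  haveI hrc := ringChar.charP F
  haveI hcharF : CharP F p := by
    obtain ⟨n, hprime, hcard⟩ := FiniteField.card F (ringChar F)
    have hdvd : p ∣ (ringChar F) ^ (n : ℕ) := by
      rw [← hcard, hF, hq]
      exact dvd_pow_self p (by omega)
    have hpr : p = ringChar F :=
      (Nat.prime_dvd_prime_iff_eq hp hprime).mp (hp.dvd_of_dvd_pow hdvd)
    rw [hpr]
    exact ringChar.charP F
  have hq2 : 2 ≤ q := hq2' (F := F) hq hm hF
  have hfq : f = qSer q a := by
    ext j
    by_cases hj : ∃ t, q ^ t = j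
    · obtain ⟨t, rfl⟩ := hj
      rw [hf1, qSer_coeff_pow hq2]
    · push_neg at hj
      rw [hf2 j hj, qSer_coeff_eq_zero a hj]
  constructor
  · intro halg
    obtain ⟨n, c, hex, hrel⟩ := exists_relation_of_isAlgebraic q f halg
    rw [hfq] at hrel
    exact eventually_periodic_of_qpow_relation hq hm hF a n c hex hrel
  · rintro ⟨N, P, hP, hper⟩
    rw [hfq]
    exact isAlgebraic_of_eventually_periodic hq hm hF a N P hP hper
end

section
/- Let q ≥ 2 and let a = (a_n)_{n ≥ 0} be a q-automatic sequence with values in a finite linearly ordered alphabet A. Let X be the closure, in the product topology on A^ℕ (A discrete), of the orbit {T^k(a) : k ≥ 0} of a under the shift map T. If z is the lexicographically least element of X, then z is q-automatic. -/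
/-- A sequence `a : ℕ → A` is `q`-automatic if its `q`-kernel, the set of
subsequences `n ↦ a (q^k * n + r)` with `k ≥ 0` and `0 ≤ r < q^k`, is finite. -/
def IsQAutomatic {A : Type*} (q : ℕ) (a : ℕ → A) : Prop :=
  {s : ℕ → A | ∃ k r : ℕ, r < q ^ k ∧ s = fun n => a (q ^ k * n + r)}.Finite

namespace LexAutoAux

open Classical Set

variable {A : Type*}

/-- Lexicographic (non-strict) comparison of sequences. -/
def lexLE [LT A] (v w : ℕ → A) : Prop :=
  v = w ∨ ∃ n, (∀ i < n, v i = w i) ∧ v n < w n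

theorem lexLE_antisymm [LinearOrder A] {v w : ℕ → A} (h1 : lexLE v w) (h2 : lexLE w v) :
    v = w := by
  rcases h1 with h1 | ⟨n1, e1, l1⟩
  · exact h1
  rcases h2 with h2 | ⟨n2, e2, l2⟩
  · exact h2.symm
  exfalso
  rcases lt_trichotomy n1 n2 with h | h | h
  · exact absurd (e2 n1 h).symm (ne_of_lt l1)
  · subst h; exact absurd (l1.trans l2) (lt_irrefl _)
  · exact absurd (e1 n2 h) (ne_of_gt l2)

/-- Membership in the orbit closure is equivalent to every prefix being a factor. -/
theorem mem_closure_tails_iff [TopologicalSpace A] [DiscreteTopology A] (a w : ℕ → A) :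
    w ∈ closure {s : ℕ → A | ∃ k : ℕ, s = fun n => a (n + k)} ↔
      ∀ N : ℕ, ∃ i : ℕ, ∀ t < N, w t = a (t + i) := by
  constructor
  · intro h N
    have hopen : IsOpen {y : ℕ → A | ∀ t < N, y t = w t} := by
      have he : {y : ℕ → A | ∀ t < N, y t = w t} =
          ⋂ t ∈ Finset.range N, (fun y : ℕ → A => y t) ⁻¹' {w t} := by
        ext y
        simp [Set.mem_iInter, Finset.mem_range]
      rw [he]
      exact isOpen_biInter_finset fun t _ =>
        (isOpen_discrete {w t}).preimage (continuous_apply t)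
    obtain ⟨y, hy1, hy2⟩ := mem_closure_iff.mp h _ hopen (fun t _ => rfl)
    obtain ⟨i, rfl⟩ := hy2
    exact ⟨i, fun t ht => (hy1 t ht).symm⟩
  · intro h
    choose i hi using h
    refine mem_closure_of_tendsto (f := fun N (n : ℕ) => a (n + i N)) (b := Filter.atTop) ?_
      (Filter.Eventually.of_forall fun N => ⟨i N, rfl⟩)
    rw [tendsto_pi_nhds]
    intro t
    refine Filter.Tendsto.congr' ?_ tendsto_const_nhds
    filter_upwards [Filter.eventually_ge_atTop (t + 1)] with N hN
    exact hi N t (by omega)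

section Main

variable (q : ℕ) (a : ℕ → A)

/-- The `q`-kernel of `a`, as a set. -/
def KS : Set (ℕ → A) := {s : ℕ → A | ∃ k r : ℕ, r < q ^ k ∧ s = fun n => a (q ^ k * n + r)}

theorem sk_mem {k r : ℕ} (h : r < q ^ k) : (fun n => a (q ^ k * n + r)) ∈ KS q a :=
  ⟨k, r, h, rfl⟩

/-- The finite "letter" alphabet: functions from the kernel to `A`. -/
abbrev C := ↥(KS q a) → A

/-- The associated substitutive sequence over `C`. -/
def u : ℕ → C q a := fun n s => s.1 n

/-- The kernel element `n ↦ a (q^k n + s % q^k)` as an element of the kernel subtype. -/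
def skm (hq0 : 0 < q) (k s : ℕ) : ↥(KS q a) :=
  ⟨fun n => a (q ^ k * n + s % q ^ k), sk_mem q a (Nat.mod_lt _ (pow_pos hq0 k))⟩

/-- Value of letter `b` at in-block offset `s` (mod `q^k`) at level `k`. -/
def val (hq0 : 0 < q) (k s : ℕ) (b : C q a) : A := b (skm q a hq0 k s)

/-- The "decoding at level `k` with cut `c`" of a `C`-sequence. -/
def Gam (hq0 : 0 < q) (k c : ℕ) (y : ℕ → C q a) : ℕ → A :=
  fun t => val q a hq0 k (c + t) (y ((c + t) / q ^ k))

theorem skm_congr (hq0 : 0 < q) {k s s' : ℕ} (h : s % q ^ k = s' % q ^ k) :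
    skm q a hq0 k s = skm q a hq0 k s' := by
  have hf : (fun n => a (q ^ k * n + s % q ^ k)) = (fun n => a (q ^ k * n + s' % q ^ k)) := by
    rw [h]
  unfold skm
  exact Subtype.ext hf

theorem val_mod (hq0 : 0 < q) (k s : ℕ) (b : C q a) :
    val q a hq0 k s b = val q a hq0 k (s % q ^ k) b := by
  unfold val
  rw [skm_congr q a hq0 (Nat.mod_eq_of_lt (Nat.mod_lt _ (pow_pos hq0 k))).symm]

theorem Gam_eq (hq0 : 0 < q) (k c : ℕ) (y : ℕ → C q a) (t : ℕ) :
    Gam q a hq0 k c y t = val q a hq0 k ((c + t) % q ^ k) (y ((c + t) / q ^ k)) := by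
  unfold Gam
  rw [val_mod]

theorem Gam_at (hq0 : 0 < q) {k c : ℕ} (y : ℕ → C q a) {n s : ℕ} (hs : s < q ^ k)
    (hcs : c ≤ q ^ k * n + s) :
    Gam q a hq0 k c y (q ^ k * n + s - c) = val q a hq0 k s (y n) := by
  have h1 : c + (q ^ k * n + s - c) = q ^ k * n + s := by omega
  have hdiv : (q ^ k * n + s) / q ^ k = n := by
    rw [Nat.mul_add_div (pow_pos hq0 k), Nat.div_eq_of_lt hs, add_zero]
  have hmod : (q ^ k * n + s) % q ^ k = s := by
    rw [Nat.mul_add_mod, Nat.mod_eq_of_lt hs]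
  unfold Gam
  rw [h1, hdiv, val_mod, hmod]

theorem Gam_at0 (hq0 : 0 < q) {k c : ℕ} (y : ℕ → C q a) {s : ℕ} (hs : s < q ^ k)
    (hcs : c ≤ s) :
    Gam q a hq0 k c y (s - c) = val q a hq0 k s (y 0) := by
  have := Gam_at q a hq0 y (n := 0) hs (show c ≤ q ^ k * 0 + s by omega)
  simpa using this

theorem val_u (hq0 : 0 < q) (k s m : ℕ) :
    val q a hq0 k s (u q a m) = a (q ^ k * m + s % q ^ k) := rfl

theorem Gam_shift_u (hq0 : 0 < q) (k c j t : ℕ) :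
    Gam q a hq0 k c (fun s => u q a (s + j)) t = a (t + (q ^ k * j + c)) := by
  show val q a hq0 k (c + t) (u q a ((c + t) / q ^ k + j)) = a (t + (q ^ k * j + c))
  rw [val_u]
  congr 1
  have hdm := Nat.div_add_mod (c + t) (q ^ k)
  have h1 : q ^ k * ((c + t) / q ^ k + j) = q ^ k * ((c + t) / q ^ k) + q ^ k * j := by ring
  omega

/-- Sequences over `C` all of whose prefixes are factors of `u`. -/
def Dset : Set (ℕ → C q a) := {y | ∀ L : ℕ, ∃ i : ℕ, ∀ t < L, y t = u q a (t + i)}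

theorem shift_u_mem_Dset (j : ℕ) : (fun s => u q a (s + j)) ∈ Dset q a :=
  fun _ => ⟨j, fun _ _ => rfl⟩

theorem isClosed_Dset [TopologicalSpace A] [DiscreteTopology A]
    (ha : (KS q a).Finite) : IsClosed (Dset q a) := by
  haveI := ha.to_subtype
  have he : Dset q a = ⋂ L : ℕ,
      (fun (y : ℕ → C q a) (t : Fin L) => y t) ⁻¹'
        {v : Fin L → C q a | ∃ i, ∀ t : Fin L, v t = u q a (t + i)} := by
    ext y
    simp only [Set.mem_iInter, Set.mem_preimage, Set.mem_setOf_eq, Dset]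
    constructor
    · intro h L
      obtain ⟨i, hi⟩ := h L
      exact ⟨i, fun t => hi t t.2⟩
    · intro h L
      obtain ⟨i, hi⟩ := h L
      exact ⟨i, fun t ht => hi ⟨t, ht⟩⟩
  rw [he]
  exact isClosed_iInter fun L =>
    (isClosed_discrete _).preimage (continuous_pi fun t => continuous_apply _)

/-- Every decoding of an element of `Dset` has all its prefixes among factors of `a`. -/
theorem Gam_prefix (hq0 : 0 < q) {y : ℕ → C q a} (hy : y ∈ Dset q a) (k c : ℕ) (N : ℕ) :
    ∃ i, ∀ t < N, Gam q a hq0 k c y t = a (t + i) := by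
  obtain ⟨j, hj⟩ := hy ((c + N) / q ^ k + 1)
  refine ⟨q ^ k * j + c, fun t ht => ?_⟩
  have hlt : (c + t) / q ^ k < (c + N) / q ^ k + 1 := by
    have h1 : (c + t) ≤ c + N := by omega
    exact lt_of_le_of_lt (Nat.div_le_div_right h1) (Nat.lt_succ_self _)
  have h2 : Gam q a hq0 k c y t = Gam q a hq0 k c (fun s => u q a (s + j)) t := by
    show val q a hq0 k (c + t) (y ((c + t) / q ^ k)) =
      val q a hq0 k (c + t) (u q a ((c + t) / q ^ k + j))
    rw [hj _ hlt]
  rw [h2, Gam_shift_u]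


/-- Key existence: at every level `k` there is a cut `c` and a desubstituted sequence
`y` with all prefixes factors of `u`, whose decoding is exactly `z`. -/
theorem exists_good [TopologicalSpace A] [DiscreteTopology A] [Finite A]
    (hq0 : 0 < q) (ha : (KS q a).Finite) (z : ℕ → A)
    (hzc : ∀ N, ∃ i, ∀ t < N, z t = a (t + i)) (k : ℕ) :
    ∃ c, c < q ^ k ∧ ∃ y ∈ Dset q a, Gam q a hq0 k c y = z := by
  haveI := ha.to_subtype
  have hQ : 0 < q ^ k := pow_pos hq0 k
  have step : ∀ L : ℕ, ∃ c, c < q ^ k ∧ ∃ j, ∀ t < L,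
      Gam q a hq0 k c (fun s => u q a (s + j)) t = z t := by
    intro L
    obtain ⟨i, hi⟩ := hzc L
    refine ⟨i % q ^ k, Nat.mod_lt _ hQ, i / q ^ k, fun t ht => ?_⟩
    rw [Gam_shift_u]
    have hdm : q ^ k * (i / q ^ k) + i % q ^ k = i := Nat.div_add_mod i (q ^ k)
    rw [hdm]
    exact (hi t ht).symm
  choose cL hcL jL hjL using step
  have pig : ∃ c, c < q ^ k ∧ ∀ L, ∃ L', L ≤ L' ∧ cL L' = c := by
    have hinf : ∃ c ∈ Finset.range (q ^ k), (cL ⁻¹' {c}).Infinite := by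
      by_contra hfin
      push_neg at hfin
      have huniv : (Set.univ : Set ℕ) ⊆ ⋃ c ∈ Finset.range (q ^ k), cL ⁻¹' {c} := by
        intro L _
        exact Set.mem_biUnion (Finset.mem_range.mpr (hcL L)) rfl
      have : (Set.univ : Set ℕ).Finite :=
        Set.Finite.subset (Set.Finite.biUnion (Finset.range (q ^ k)).finite_toSet
          fun c hc => hfin c hc) huniv
      exact Set.infinite_univ this
    obtain ⟨c, hc, hcinf⟩ := hinf
    refine ⟨c, Finset.mem_range.mp hc, fun L => ?_⟩
    obtain ⟨L', hL'mem, hL'⟩ := hcinf.exists_gt L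
    exact ⟨L', le_of_lt hL', hL'mem⟩
  obtain ⟨c, hclt, hcinf⟩ := pig
  set V : ℕ → Set (ℕ → C q a) :=
    fun L => {y | y ∈ Dset q a ∧ ∀ t < L, Gam q a hq0 k c y t = z t} with hV
  have hVdec : ∀ L, V (L + 1) ⊆ V L := by
    intro L y hy
    obtain ⟨h1, h2⟩ := hy
    exact ⟨h1, fun t ht => h2 t (by omega)⟩
  have hVne : ∀ L, (V L).Nonempty := by
    intro L
    obtain ⟨L', hLL', hceq⟩ := hcinf L
    refine ⟨fun s => u q a (s + jL L'), shift_u_mem_Dset q a _, fun t ht => ?_⟩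
    have := hjL L' t (by omega)
    rwa [hceq] at this
  have hVcl : ∀ L, IsClosed (V L) := by
    intro L
    have hVL : V L = Dset q a ∩ ⋂ t ∈ Finset.range L,
        (fun y : ℕ → C q a => y ((c + t) / q ^ k)) ⁻¹'
          {b : C q a | val q a hq0 k (c + t) b = z t} := by
      ext y
      constructor
      · rintro ⟨h1, h2⟩
        refine ⟨h1, ?_⟩
        simp only [Set.mem_iInter, Set.mem_preimage, Set.mem_setOf_eq, Finset.mem_range]
        intro t ht
        exact h2 t ht
      · rintro ⟨h1, h2⟩
        simp only [Set.mem_iInter, Set.mem_preimage, Set.mem_setOf_eq, Finset.mem_range] at h2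
        exact ⟨h1, fun t ht => h2 t ht⟩
    rw [hVL]
    refine (isClosed_Dset q a ha).inter ?_
    refine isClosed_biInter fun t ht => ?_
    exact (isClosed_discrete _).preimage (continuous_apply _)
  have hne := IsCompact.nonempty_iInter_of_sequence_nonempty_isCompact_isClosed V hVdec hVne
    ((hVcl 0).isCompact) hVcl
  obtain ⟨y, hy⟩ := hne
  simp only [Set.mem_iInter] at hy
  refine ⟨c, hclt, y, (hy 0).1, funext fun t => (hy (t + 1)).2 t (Nat.lt_succ_self t)⟩

/-- Blockwise equality relation at level `k`, from offset `c` on. -/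
def Ew [LinearOrder A] (hq0 : 0 < q) (k c : ℕ) (b b' : C q a) : Prop :=
  ∀ s, c ≤ s → s < q ^ k → val q a hq0 k s b = val q a hq0 k s b'

/-- Blockwise strict lexicographic comparison at level `k`, from offset `c` on. -/
def Lw [LinearOrder A] (hq0 : 0 < q) (k c : ℕ) (b b' : C q a) : Prop :=
  ∃ s, c ≤ s ∧ s < q ^ k ∧
    (∀ s', c ≤ s' → s' < s → val q a hq0 k s' b = val q a hq0 k s' b') ∧
    val q a hq0 k s b < val q a hq0 k s b'

/-- Abstract form of the lexicographic comparison of decodings. -/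
def Pform {CC : Type*} (E0 L0 E1 L1 : CC → CC → Prop) (y y' : ℕ → CC) : Prop :=
  (∀ n, (if n = 0 then E0 else E1) (y n) (y' n)) ∨
    ∃ n, (∀ i < n, (if i = 0 then E0 else E1) (y i) (y' i)) ∧
      (if n = 0 then L0 else L1) (y n) (y' n)

theorem lex_iff_Pform [LinearOrder A] (hq0 : 0 < q) {k c : ℕ} (hc : c < q ^ k)
    (y y' : ℕ → C q a) :
    lexLE (Gam q a hq0 k c y) (Gam q a hq0 k c y') ↔
      Pform (Ew q a hq0 k c) (Lw q a hq0 k c) (Ew q a hq0 k 0) (Lw q a hq0 k 0) y y' := by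
  have hQ : 0 < q ^ k := pow_pos hq0 k
  simp only [lexLE, Pform]
  constructor
  · rintro (heq | ⟨p, hpre, hlt⟩)
    · left
      intro n
      by_cases hn : n = 0
      · subst hn
        rw [if_pos rfl]
        intro s hcs hsQ
        calc val q a hq0 k s (y 0) = Gam q a hq0 k c y (s - c) :=
              (Gam_at0 q a hq0 y hsQ hcs).symm
          _ = Gam q a hq0 k c y' (s - c) := by rw [heq]
          _ = val q a hq0 k s (y' 0) := Gam_at0 q a hq0 y' hsQ hcs
      · rw [if_neg hn]
        intro s _ hsQ
        have hcle : c ≤ q ^ k * n + s := by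
          have h1 : q ^ k ≤ q ^ k * n := Nat.le_mul_of_pos_right _ (Nat.pos_of_ne_zero hn)
          omega
        calc val q a hq0 k s (y n) = Gam q a hq0 k c y (q ^ k * n + s - c) :=
              (Gam_at q a hq0 y hsQ hcle).symm
          _ = Gam q a hq0 k c y' (q ^ k * n + s - c) := by rw [heq]
          _ = val q a hq0 k s (y' n) := Gam_at q a hq0 y' hsQ hcle
    · right
      obtain ⟨n, s, hsQ, hdm⟩ : ∃ n s, s < q ^ k ∧ q ^ k * n + s = c + p :=
        ⟨(c + p) / q ^ k, (c + p) % q ^ k, Nat.mod_lt _ hQ, Nat.div_add_mod _ _⟩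
      have hpos : ∀ {i si : ℕ}, i ≠ 0 → si < q ^ k → c ≤ q ^ k * i + si := by
        intro i si hi0 _
        have h1 : q ^ k ≤ q ^ k * i := Nat.le_mul_of_pos_right _ (Nat.pos_of_ne_zero hi0)
        omega
      refine ⟨n, ?_, ?_⟩
      · intro i hi
        have hin : q ^ k * (i + 1) ≤ q ^ k * n := Nat.mul_le_mul_left _ (by omega)
        have hiexp : q ^ k * (i + 1) = q ^ k * i + q ^ k := by ring
        by_cases hi0 : i = 0
        · subst hi0
          rw [if_pos rfl]
          intro s' hcs' hs'Q
          have hargp : s' - c < p := by omega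
          calc val q a hq0 k s' (y 0) = Gam q a hq0 k c y (s' - c) :=
                (Gam_at0 q a hq0 y hs'Q hcs').symm
            _ = Gam q a hq0 k c y' (s' - c) := hpre _ hargp
            _ = val q a hq0 k s' (y' 0) := Gam_at0 q a hq0 y' hs'Q hcs'
        · rw [if_neg hi0]
          intro s' _ hs'Q
          have hcle : c ≤ q ^ k * i + s' := hpos hi0 hs'Q
          have hargp : q ^ k * i + s' - c < p := by omega
          calc val q a hq0 k s' (y i) = Gam q a hq0 k c y (q ^ k * i + s' - c) :=
                (Gam_at q a hq0 y hs'Q hcle).symm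
            _ = Gam q a hq0 k c y' (q ^ k * i + s' - c) := hpre _ hargp
            _ = val q a hq0 k s' (y' i) := Gam_at q a hq0 y' hs'Q hcle
      · by_cases hn0 : n = 0
        · rw [hn0, if_pos rfl]
          have hdm0 : q ^ k * n = 0 := by rw [hn0, Nat.mul_zero]
          have hscp : s = c + p := by omega
          have hcpQ : c + p < q ^ k := by omega
          refine ⟨c + p, by omega, hcpQ, ?_, ?_⟩
          · intro s' hcs' hs's
            have h1 : s' < q ^ k := by omega
            have h2 : s' - c < p := by omega
            calc val q a hq0 k s' (y 0) = Gam q a hq0 k c y (s' - c) :=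
                  (Gam_at0 q a hq0 y h1 hcs').symm
              _ = Gam q a hq0 k c y' (s' - c) := hpre _ h2
              _ = val q a hq0 k s' (y' 0) := Gam_at0 q a hq0 y' h1 hcs'
          · have h3 := Gam_at0 q a hq0 (k := k) (c := c) y (s := c + p) hcpQ (by omega)
            have h4 := Gam_at0 q a hq0 (k := k) (c := c) y' (s := c + p) hcpQ (by omega)
            have h5 : c + p - c = p := by omega
            rw [h5] at h3 h4
            rw [← h3, ← h4]
            exact hlt
        · rw [if_neg hn0]
          refine ⟨s, Nat.zero_le _, hsQ, ?_, ?_⟩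
          · intro s' _ hs's
            have hcle : c ≤ q ^ k * n + s' := hpos hn0 (by omega)
            have hargp : q ^ k * n + s' - c < p := by omega
            calc val q a hq0 k s' (y n) = Gam q a hq0 k c y (q ^ k * n + s' - c) :=
                  (Gam_at q a hq0 y (by omega) hcle).symm
              _ = Gam q a hq0 k c y' (q ^ k * n + s' - c) := hpre _ hargp
              _ = val q a hq0 k s' (y' n) := Gam_at q a hq0 y' (by omega) hcle
          · have h3 := Gam_at q a hq0 (c := c) y (n := n) hsQ (by omega)
            have h4 := Gam_at q a hq0 (c := c) y' (n := n) hsQ (by omega)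
            have hp : q ^ k * n + s - c = p := by omega
            rw [hp] at h3 h4
            rw [← h3, ← h4]
            exact hlt
  · rintro (hall | ⟨n, hEpre, hL⟩)
    · left
      funext t
      obtain ⟨dv, md, hmd, hdmsum⟩ : ∃ dv md, md < q ^ k ∧ q ^ k * dv + md = c + t :=
        ⟨(c + t) / q ^ k, (c + t) % q ^ k, Nat.mod_lt _ hQ, Nat.div_add_mod _ _⟩
      have hdv : (c + t) / q ^ k = dv := by
        rw [← hdmsum, Nat.mul_add_div hQ, Nat.div_eq_of_lt hmd, add_zero]
      have hmd' : (c + t) % q ^ k = md := by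
        rw [← hdmsum, Nat.mul_add_mod, Nat.mod_eq_of_lt hmd]
      rw [Gam_eq, Gam_eq, hdv, hmd']
      have hb := hall dv
      by_cases hn0 : dv = 0
      · rw [hn0] at hb ⊢
        rw [if_pos rfl] at hb
        have hsc : c ≤ md := by
          rw [hn0, Nat.mul_zero] at hdmsum
          omega
        exact hb _ hsc hmd
      · rw [if_neg hn0] at hb
        exact hb _ (Nat.zero_le _) hmd
    · right
      by_cases hn0 : n = 0
      · subst hn0
        rw [if_pos rfl] at hL
        obtain ⟨s, hcs, hsQ, hLpre, hstrict⟩ := hL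
        refine ⟨s - c, fun t' ht' => ?_, ?_⟩
        · have h1 : c + t' < s := by omega
          have h2 : c + t' < q ^ k := by omega
          rw [Gam_eq, Gam_eq, Nat.div_eq_of_lt h2, Nat.mod_eq_of_lt h2]
          exact hLpre (c + t') (by omega) h1
        · have h3 := Gam_at0 q a hq0 y hsQ hcs
          have h4 := Gam_at0 q a hq0 y' hsQ hcs
          rw [h3, h4]
          exact hstrict
      · rw [if_neg hn0] at hL
        obtain ⟨s, _, hsQ, hLpre, hstrict⟩ := hL
        have hQn : q ^ k ≤ q ^ k * n := Nat.le_mul_of_pos_right _ (Nat.pos_of_ne_zero hn0)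
        have hcle : c ≤ q ^ k * n + s := by omega
        refine ⟨q ^ k * n + s - c, fun t' ht' => ?_, ?_⟩
        · obtain ⟨dv, md, hmd, hdmsum⟩ : ∃ dv md, md < q ^ k ∧ q ^ k * dv + md = c + t' :=
            ⟨(c + t') / q ^ k, (c + t') % q ^ k, Nat.mod_lt _ hQ, Nat.div_add_mod _ _⟩
          have hdv : (c + t') / q ^ k = dv := by
            rw [← hdmsum, Nat.mul_add_div hQ, Nat.div_eq_of_lt hmd, add_zero]
          have hmd' : (c + t') % q ^ k = md := by
            rw [← hdmsum, Nat.mul_add_mod, Nat.mod_eq_of_lt hmd]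
          have hlt2 : c + t' < q ^ k * n + s := by omega
          rw [Gam_eq, Gam_eq, hdv, hmd']
          have hdvle : dv ≤ n := by
            by_contra hgt
            push_neg at hgt
            have h5 : q ^ k * (n + 1) ≤ q ^ k * dv := Nat.mul_le_mul_left _ hgt
            have h6 : q ^ k * (n + 1) = q ^ k * n + q ^ k := by ring
            omega
          rcases Nat.lt_or_ge dv n with hlt3 | hge
          · have hb := hEpre _ hlt3
            by_cases hn'0 : dv = 0
            · rw [hn'0] at hb ⊢
              rw [if_pos rfl] at hb
              have hsc : c ≤ md := by
                rw [hn'0, Nat.mul_zero] at hdmsum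
                omega
              exact hb _ hsc hmd
            · rw [if_neg hn'0] at hb
              exact hb _ (Nat.zero_le _) hmd
          · have hne' : dv = n := le_antisymm hdvle hge
            rw [hne'] at hdmsum ⊢
            exact hLpre _ (Nat.zero_le _) (by omega)
        · have h3 := Gam_at q a hq0 y hsQ hcle
          have h4 := Gam_at q a hq0 y' hsQ hcle
          rw [h3, h4]
          exact hstrict

/-- The set of minimizers among prefix-admissible sequences, for the decoding order. -/
def Dmin [LinearOrder A] (hq0 : 0 < q) (k c : ℕ) : Set (ℕ → C q a) :=
  {y | y ∈ Dset q a ∧ ∀ y' ∈ Dset q a, lexLE (Gam q a hq0 k c y) (Gam q a hq0 k c y')}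

theorem Dmin_eq [LinearOrder A] (hq0 : 0 < q) {k c k' c' : ℕ} (hc : c < q ^ k)
    (hc' : c' < q ^ k')
    (h0 : Ew q a hq0 k c = Ew q a hq0 k' c') (h1 : Lw q a hq0 k c = Lw q a hq0 k' c')
    (h2 : Ew q a hq0 k 0 = Ew q a hq0 k' 0) (h3 : Lw q a hq0 k 0 = Lw q a hq0 k' 0) :
    Dmin q a hq0 k c = Dmin q a hq0 k' c' := by
  ext Y
  simp only [Dmin, Set.mem_setOf_eq]
  constructor
  · rintro ⟨hD, hm⟩
    refine ⟨hD, fun y' hy' => ?_⟩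
    rw [lex_iff_Pform q a hq0 hc', ← h0, ← h1, ← h2, ← h3]
    exact (lex_iff_Pform q a hq0 hc Y y').mp (hm y' hy')
  · rintro ⟨hD, hm⟩
    refine ⟨hD, fun y' hy' => ?_⟩
    rw [lex_iff_Pform q a hq0 hc, h0, h1, h2, h3]
    exact (lex_iff_Pform q a hq0 hc' Y y').mp (hm y' hy')

/-- The comparison data of a level/cut pair. -/
def dat [LinearOrder A] (hq0 : 0 < q) (k c : ℕ) :
    (C q a → C q a → Prop) × (C q a → C q a → Prop) × (C q a → C q a → Prop) ×
      (C q a → C q a → Prop) :=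
  (Ew q a hq0 k c, Lw q a hq0 k c, Ew q a hq0 k 0, Lw q a hq0 k 0)

/-- Canonical selection of a minimizer, depending only on the comparison data. -/
noncomputable def gsel [LinearOrder A] [Nonempty A] (hq0 : 0 < q)
    (d : (C q a → C q a → Prop) × (C q a → C q a → Prop) × (C q a → C q a → Prop) ×
      (C q a → C q a → Prop)) : ℕ → C q a :=
  if h : ∃ p : ℕ × ℕ, p.2 < q ^ p.1 ∧ dat q a hq0 p.1 p.2 = d ∧
      (Dmin q a hq0 p.1 p.2).Nonempty then
    h.choose_spec.2.2.some
  else Classical.arbitrary _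

theorem gsel_mem [LinearOrder A] [Nonempty A] (hq0 : 0 < q) {k c : ℕ} (hc : c < q ^ k)
    (hne : (Dmin q a hq0 k c).Nonempty) :
    gsel q a hq0 (dat q a hq0 k c) ∈ Dmin q a hq0 k c := by
  have h : ∃ p : ℕ × ℕ, p.2 < q ^ p.1 ∧ dat q a hq0 p.1 p.2 = dat q a hq0 k c ∧
      (Dmin q a hq0 p.1 p.2).Nonempty := ⟨(k, c), hc, rfl, hne⟩
  rw [gsel, dif_pos h]
  have hd := h.choose_spec.2.1
  have heq : Dmin q a hq0 h.choose.1 h.choose.2 = Dmin q a hq0 k c := by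
    apply Dmin_eq q a hq0 h.choose_spec.1 hc
    · exact congrArg (fun x => x.1) hd
    · exact congrArg (fun x => x.2.1) hd
    · exact congrArg (fun x => x.2.2.1) hd
    · exact congrArg (fun x => x.2.2.2) hd
  rw [← heq]
  exact h.choose_spec.2.2.some_mem

end Main

end LexAutoAux

theorem lexLeast_in_orbitClosure_automatic
    {A : Type*} [Fintype A] [LinearOrder A] [TopologicalSpace A] [DiscreteTopology A]
    (q : ℕ) (hq : 2 ≤ q) (a : ℕ → A) (ha : IsQAutomatic q a)
    (z : ℕ → A)
    (hz : z ∈ closure {s : ℕ → A | ∃ k : ℕ, s = fun n => a (n + k)})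
    (hmin : ∀ w ∈ closure {s : ℕ → A | ∃ k : ℕ, s = fun n => a (n + k)},
      z = w ∨ ∃ n : ℕ, (∀ i < n, z i = w i) ∧ z n < w n) :
    IsQAutomatic q z := by
  classical
  haveI : Nonempty A := ⟨z 0⟩
  have hq0 : 0 < q := by omega
  have haK : (LexAutoAux.KS q a).Finite := ha
  haveI := haK.to_subtype
  have hzc : ∀ N, ∃ i, ∀ t < N, z t = a (t + i) :=
    (LexAutoAux.mem_closure_tails_iff a z).mp hz
  have hgood := fun k => LexAutoAux.exists_good q a hq0 haK z hzc k
  choose ck hck wk hwkD hwkG using hgood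
  have key : ∀ k c (y' : ℕ → LexAutoAux.C q a), y' ∈ LexAutoAux.Dset q a →
      LexAutoAux.lexLE z (LexAutoAux.Gam q a hq0 k c y') := by
    intro k c y' hy'
    exact hmin _ ((LexAutoAux.mem_closure_tails_iff a _).mpr
      (fun N => LexAutoAux.Gam_prefix q a hq0 hy' k c N))
  have hDm : ∀ k, (LexAutoAux.Dmin q a hq0 k (ck k)).Nonempty := by
    intro k
    exact ⟨wk k, hwkD k, fun y' hy' => by rw [hwkG k]; exact key k (ck k) y' hy'⟩
  have hGz : ∀ k, ∀ Y ∈ LexAutoAux.Dmin q a hq0 k (ck k),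
      LexAutoAux.Gam q a hq0 k (ck k) Y = z := by
    intro k Y hY
    obtain ⟨hY1, hY2⟩ := hY
    have h1 : LexAutoAux.lexLE (LexAutoAux.Gam q a hq0 k (ck k) Y) z := by
      have := hY2 (wk k) (hwkD k)
      rwa [hwkG k] at this
    exact LexAutoAux.lexLE_antisymm h1 (key k (ck k) Y hY1)
  show ({s : ℕ → A | ∃ k r : ℕ, r < q ^ k ∧ s = fun n => z (q ^ k * n + r)}).Finite
  apply Set.Finite.subset (Set.finite_range
    (fun x : ((LexAutoAux.C q a → LexAutoAux.C q a → Prop) ×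
        (LexAutoAux.C q a → LexAutoAux.C q a → Prop) ×
        (LexAutoAux.C q a → LexAutoAux.C q a → Prop) ×
        (LexAutoAux.C q a → LexAutoAux.C q a → Prop)) × Fin 2 × ↥(LexAutoAux.KS q a) =>
      fun m : ℕ => LexAutoAux.gsel q a hq0 x.1 (m + (x.2.1 : ℕ)) x.2.2))
  rintro s ⟨k, r, hr, rfl⟩
  have hQ : 0 < q ^ k := pow_pos hq0 k
  set c := ck k with hcdef
  set Y := LexAutoAux.gsel q a hq0 (LexAutoAux.dat q a hq0 k c) with hYdef
  have hYm : Y ∈ LexAutoAux.Dmin q a hq0 k c :=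
    LexAutoAux.gsel_mem q a hq0 (hck k) (hDm k)
  have hYz : LexAutoAux.Gam q a hq0 k c Y = z := hGz k Y hYm
  have he2 : (c + r) / q ^ k < 2 := by
    apply Nat.div_lt_of_lt_mul
    have := hck k
    omega
  refine ⟨⟨LexAutoAux.dat q a hq0 k c, ⟨(c + r) / q ^ k, he2⟩,
    LexAutoAux.skm q a hq0 k (c + r)⟩, ?_⟩
  funext m
  show Y (m + (c + r) / q ^ k) (LexAutoAux.skm q a hq0 k (c + r)) = z (q ^ k * m + r)
  rw [← hYz]
  show Y (m + (c + r) / q ^ k) (LexAutoAux.skm q a hq0 k (c + r)) =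
    Y ((c + (q ^ k * m + r)) / q ^ k) (LexAutoAux.skm q a hq0 k (c + (q ^ k * m + r)))
  have har : c + (q ^ k * m + r) = q ^ k * m + (c + r) := by ring
  have hdiv : (c + (q ^ k * m + r)) / q ^ k = m + (c + r) / q ^ k := by
    rw [har, Nat.mul_add_div hQ]
  have hmodeq : LexAutoAux.skm q a hq0 k (c + (q ^ k * m + r)) =
      LexAutoAux.skm q a hq0 k (c + r) := by
    apply LexAutoAux.skm_congr q a hq0
    rw [har, Nat.mul_add_mod]
  rw [hdiv, hmodeq]
end

section
/- Let q ≥ 2 and let a = (a_n)_{n ≥ 0} be a q-automatic sequence with values in a finite alphabet A, and let b ∈ A. If the letter frequency lim_{N → ∞} (1/N)·#{n < N : a_n = b} exists and equals ℓ, then ℓ is a rational number. -/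
open Finset Filter

lemma count_mul (q N : ℕ) (hq : 0 < q) (p : ℕ → Prop) [DecidablePred p] :
    ((Finset.range (q * N)).filter p).card
      = ∑ r ∈ Finset.range q, ((Finset.range N).filter (fun m => p (q * m + r))).card := by
  simp_rw [Finset.card_filter]
  rw [← Finset.sum_product']
  refine Finset.sum_nbij' (fun n => (n % q, n / q)) (fun pr => q * pr.2 + pr.1) ?_ ?_ ?_ ?_ ?_
  · intro n hn
    simp only [Finset.mem_range] at hn
    simp only [Finset.mem_product, Finset.mem_range]
    exact ⟨Nat.mod_lt _ hq, Nat.div_lt_of_lt_mul (by omega)⟩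
  · intro pr hpr
    simp only [Finset.mem_product, Finset.mem_range] at hpr
    simp only [Finset.mem_range]
    calc q * pr.2 + pr.1 < q * pr.2 + q := by omega
    _ = q * (pr.2 + 1) := by ring
    _ ≤ q * N := Nat.mul_le_mul_left _ (by omega)
  · intro n hn
    exact Nat.div_add_mod n q
  · intro pr hpr
    simp only [Finset.mem_product, Finset.mem_range] at hpr
    have h1 : (q * pr.2 + pr.1) % q = pr.1 := by
      rw [Nat.mul_add_mod]
      exact Nat.mod_eq_of_lt hpr.1
    have h2 : (q * pr.2 + pr.1) / q = pr.2 := by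
      rw [Nat.mul_add_div hq, Nat.div_eq_of_lt hpr.1, add_zero]
    simp only [h1, h2]
  · intro n hn
    simp only
    rw [Nat.div_add_mod]

theorem letter_frequency_of_automatic_rational
    {A : Type*} [Fintype A] (q : ℕ) (hq : 2 ≤ q)
    (a : ℕ → A) (ha : IsQAutomatic q a) (b : A) (ℓ : ℝ)
    (hfreq : Filter.Tendsto
      (fun N : ℕ => (Set.ncard {n : ℕ | n < N ∧ a n = b} : ℝ) / N)
      Filter.atTop (nhds ℓ)) :
    ∃ r : ℚ, ℓ = r := by
  classical
  set S : Set (ℕ → A) :=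
    {s : ℕ → A | ∃ k r : ℕ, r < q ^ k ∧ s = fun n => a (q ^ k * n + r)} with hSdef
  have hSfin : S.Finite := ha
  haveI : Fintype ↥S := hSfin.fintype
  have haS : a ∈ S := ⟨0, 0, by norm_num, by funext n; simp⟩
  have hclosed : ∀ s ∈ S, ∀ r' < q, (fun n => s (q * n + r')) ∈ S := by
    rintro s ⟨k, r, hr, rfl⟩ r' hr'
    refine ⟨k + 1, q ^ k * r' + r, ?_, ?_⟩
    · calc q ^ k * r' + r < q ^ k * r' + q ^ k := by omega
      _ = q ^ k * (r' + 1) := by ring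
      _ ≤ q ^ k * q := Nat.mul_le_mul_left _ (by omega)
      _ = q ^ (k + 1) := by ring
    · funext n; simp only; congr 1; ring
  let child : ↥S → Fin q → ↥S := fun s r => ⟨_, hclosed s.1 s.2 r.1 r.2⟩
  let T : (↥S → ℚ) →ₗ[ℚ] (↥S → ℚ) :=
    { toFun := fun w s => ∑ r : Fin q, w (child s r)
      map_add' := by intro w1 w2; funext s; simp [Finset.sum_add_distrib]
      map_smul' := by intro c w; funext s; simp [Finset.mul_sum] }
  have hT_apply : ∀ (w : ↥S → ℚ) (s : ↥S), T w s = ∑ r : Fin q, w (child s r) :=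
    fun w s => rfl
  -- boundedness of powers of T
  have hbound : ∀ (w : ↥S → ℚ) (B : ℚ), (∀ t, |w t| ≤ B) →
      ∀ m (s : ↥S), |((T ^ m) w) s| ≤ q ^ m * B := by
    intro w B hB
    intro m
    induction m with
    | zero => intro s; simpa using hB s
    | succ m ih =>
      intro s
      have : (T ^ (m + 1)) w = T ((T ^ m) w) := by
        rw [pow_succ']; rfl
      rw [this, hT_apply]
      calc |∑ r : Fin q, ((T ^ m) w) (child s r)|
          ≤ ∑ r : Fin q, |((T ^ m) w) (child s r)| := Finset.abs_sum_le_sum_abs _ _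
        _ ≤ ∑ _r : Fin q, (q ^ m * B : ℚ) := Finset.sum_le_sum fun r _ => ih _
        _ = q * (q ^ m * B) := by simp [Finset.sum_const, nsmul_eq_mul]
        _ = q ^ (m + 1) * B := by ring
  -- the shifted operator
  set L : (↥S → ℚ) →ₗ[ℚ] (↥S → ℚ) := T - (q : ℚ) • LinearMap.id with hLdef
  have hL_apply : ∀ w : ↥S → ℚ, L w = T w - (q : ℚ) • w := fun w => rfl
  -- kernel and range are disjoint
  have hdisj : LinearMap.ker L ⊓ LinearMap.range L = ⊥ := by
    rw [Submodule.eq_bot_iff]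
    rintro x ⟨hker, y, hy⟩
    have hTx : T x = (q : ℚ) • x := by
      have : T x - (q : ℚ) • x = 0 := hker
      linear_combination (norm := module) this
    have hTy : T y = (q : ℚ) • y + x := by
      rw [← hy, hL_apply]; module
    -- key iteration identity
    have hiter : ∀ m : ℕ, (T ^ (m + 1)) y
        = (q : ℚ) ^ (m + 1) • y + (((m : ℚ) + 1) * (q : ℚ) ^ m) • x := by
      intro m
      induction m with
      | zero => simpa using hTy
      | succ m ih =>
        have h1 : (T ^ (m + 2)) y = T ((T ^ (m + 1)) y) := by
          rw [pow_succ']; rfl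
        rw [h1, ih, map_add, map_smul, map_smul, hTx, hTy]
        push_cast
        match_scalars <;> ring
    set By : ℚ := ∑ t : ↥S, |y t| with hBy
    have hBy' : ∀ t, |y t| ≤ By :=
      fun t => Finset.single_le_sum (fun t _ => abs_nonneg (y t)) (Finset.mem_univ t)
    have hkey : ∀ (m : ℕ) (s : ↥S), |(q : ℚ) * y s + ((m : ℚ) + 1) * x s| ≤ q * By := by
      intro m s
      have h1 := hbound y By hBy' (m + 1) s
      rw [hiter m] at h1
      have h2 : ((q : ℚ) ^ (m + 1) • y + (((m : ℚ) + 1) * (q : ℚ) ^ m) • x) s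
          = (q : ℚ) ^ m * ((q : ℚ) * y s + ((m : ℚ) + 1) * x s) := by
        simp [Pi.add_apply, Pi.smul_apply, smul_eq_mul]; ring
      rw [h2, abs_mul, abs_of_pos (by positivity : (0:ℚ) < (q:ℚ) ^ m)] at h1
      have hqm : (0:ℚ) < (q:ℚ) ^ m := by positivity
      have h3 : (q:ℚ) ^ (m+1) * By = (q:ℚ) ^ m * ((q:ℚ) * By) := by ring
      rw [h3] at h1
      exact le_of_mul_le_mul_left h1 hqm
    have hx0 : x = 0 := by
      funext s
      by_contra hxs
      have hxs' : 0 < |x s| := abs_pos.mpr hxs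
      obtain ⟨n, hn⟩ := exists_nat_gt ((q * By + q * |y s|) / |x s|)
      have h1 := hkey n s
      have h2 : ((n : ℚ) + 1) * |x s| ≤ q * By + q * |y s| := by
        have := abs_sub_abs_le_abs_sub (((n : ℚ) + 1) * x s) (-(q * y s))
        have habs : |((n:ℚ)+1) * x s| - |q * y s| ≤ |(q:ℚ) * y s + ((n:ℚ)+1) * x s| := by
          calc |((n:ℚ)+1) * x s| - |q * y s|
              ≤ |((n:ℚ)+1) * x s + q * y s| := by
                have := abs_add_le (((n:ℚ)+1) * x s + (q:ℚ) * y s) (-((q:ℚ) * y s))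
                simp only [add_neg_cancel_right] at this
                rw [abs_neg] at this
                linarith
            _ = |(q:ℚ) * y s + ((n:ℚ)+1) * x s| := by rw [add_comm]
        have hys : |(q:ℚ) * y s| = q * |y s| := by
          rw [abs_mul, abs_of_nonneg (by positivity : (0:ℚ) ≤ (q:ℚ))]
        rw [abs_mul, abs_of_nonneg (by positivity : (0:ℚ) ≤ (n:ℚ)+1)] at habs
        nlinarith [hkey n s]
      have h3 : (q * By + q * |y s|) < (n : ℚ) * |x s| :=
        (div_lt_iff₀ hxs').mp hn
      nlinarith
    rw [hx0]
  -- kernel and range span everything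
  have hsup : LinearMap.ker L ⊔ LinearMap.range L = ⊤ := by
    have h1 := LinearMap.finrank_range_add_finrank_ker L
    have h2 := Submodule.finrank_sup_add_finrank_inf_eq (LinearMap.ker L) (LinearMap.range L)
    rw [hdisj, finrank_bot] at h2
    apply Submodule.eq_top_of_finrank_eq
    omega
  -- the counting function and vectors
  set cnt : (ℕ → A) → ℕ → ℕ :=
    fun s N => ((Finset.range N).filter (fun n => s n = b)).card with hcnt
  set v : ℕ → ↥S → ℚ := fun m s => (cnt s.1 (q ^ m) : ℚ) with hv
  have hstep : ∀ m, v (m + 1) = T (v m) := by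
    intro m
    funext s
    rw [hT_apply]
    have h1 : cnt s.1 (q ^ (m + 1)) = ∑ r ∈ Finset.range q, cnt (fun n => s.1 (q * n + r)) (q ^ m) := by
      have : q ^ (m + 1) = q * q ^ m := by ring
      rw [hcnt]
      simp only [this]
      exact count_mul q (q ^ m) (by omega) (fun n => s.1 n = b)
    simp only [hv, h1]
    push_cast
    rw [Finset.sum_range fun r => (cnt (fun n => s.1 (q * n + r)) (q ^ m) : ℚ)]
  have hiterv : ∀ m, v m = (T ^ m) (v 0) := by
    intro m
    induction m with
    | zero => simp
    | succ m ih =>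
      rw [hstep m, ih, pow_succ']
      rfl
  -- decompose v 0
  have hv0top : v 0 ∈ LinearMap.ker L ⊔ LinearMap.range L := by rw [hsup]; trivial
  obtain ⟨u, hu, x, hx, huxw⟩ := Submodule.mem_sup.mp hv0top
  obtain ⟨z, hz⟩ := hx
  have hTu : T u = (q : ℚ) • u := by
    have : L u = 0 := hu
    rw [hL_apply] at this
    linear_combination (norm := module) this
  have hTmu : ∀ m, (T ^ m) u = (q : ℚ) ^ m • u := by
    intro m
    induction m with
    | zero => simp
    | succ m ih =>
      have h1 : (T ^ (m + 1)) u = T ((T ^ m) u) := by rw [pow_succ']; rfl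
      rw [h1, ih, map_smul, hTu, smul_smul, ← pow_succ]
  have hvm : ∀ m, v m = (q : ℚ) ^ m • u + ((T ^ (m + 1)) z - (q : ℚ) • (T ^ m) z) := by
    intro m
    rw [hiterv m, ← huxw, map_add, hTmu]
    congr 1
    rw [← hz, hL_apply, map_sub, map_smul]
    congr 2
  -- bound for z iterates
  set Bz : ℚ := ∑ t : ↥S, |z t| with hBz
  have hBz' : ∀ t, |z t| ≤ Bz :=
    fun t => Finset.single_le_sum (fun t _ => abs_nonneg (z t)) (Finset.mem_univ t)
  have hBznn : 0 ≤ Bz := Finset.sum_nonneg fun t _ => abs_nonneg (z t)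
  have hzb : ∀ m (s : ↥S), |((T ^ m) z) s| ≤ q ^ m * Bz := hbound z Bz hBz'
  -- the distinguished point
  set sa : ↥S := ⟨a, haS⟩ with hsa
  -- real sequences
  set g : ℕ → ℝ := fun m => (((T ^ m) z) sa : ℝ) / (q : ℝ) ^ m with hg
  have hgb : ∀ m, |g m| ≤ (Bz : ℝ) := by
    intro m
    rw [hg]
    simp only
    rw [abs_div, abs_of_pos (by positivity : (0:ℝ) < (q:ℝ) ^ m), div_le_iff₀ (by positivity : (0:ℝ) < (q:ℝ) ^ m)]
    have := hzb m sa
    have h2 : (|((T ^ m) z) sa| : ℝ) ≤ ((q ^ m * Bz : ℚ) : ℝ) := by exact_mod_cast this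
    push_cast at h2
    have h3 : (Bz : ℝ) * (q : ℝ) ^ m = (q : ℝ) ^ m * (Bz : ℝ) := mul_comm _ _
    linarith [h2, h3]
  set t : ℕ → ℝ := fun m => ((v m sa : ℚ) : ℝ) / (q : ℝ) ^ m with ht
  -- convergence of t to ℓ
  have htl : Tendsto t atTop (nhds ℓ) := by
    have hpow : Tendsto (fun m : ℕ => q ^ m) atTop atTop :=
      tendsto_pow_atTop_atTop_of_one_lt (by omega)
    have h1 := hfreq.comp hpow
    refine h1.congr fun m => ?_
    have hset : {n : ℕ | n < q ^ m ∧ a n = b}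
        = ↑((Finset.range (q ^ m)).filter (fun n => a n = b)) := by
      ext n; simp [Finset.mem_filter, Finset.mem_range]
    simp only [Function.comp_apply, hset, Set.ncard_coe_finset, ht, hv]
    push_cast
    rfl
  -- cesaro limit
  have hces : Tendsto (fun m : ℕ => (m : ℝ)⁻¹ * ∑ j ∈ Finset.range m, t j) atTop (nhds ℓ) :=
    htl.cesaro
  -- explicit formula for t
  have htform : ∀ j, t j = ((u sa : ℚ) : ℝ) + (q : ℝ) * (g (j + 1) - g j) := by
    intro j
    rw [ht]
    simp only
    rw [hvm j]
    simp only [Pi.add_apply, Pi.sub_apply, Pi.smul_apply, smul_eq_mul]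
    push_cast
    rw [hg]
    simp only
    have hq0 : (q : ℝ) ^ j ≠ 0 := by positivity
    have hq1 : (q : ℝ) ^ (j + 1) ≠ 0 := by positivity
    field_simp
    ring
  have hsum : ∀ m, ∑ j ∈ Finset.range m, t j
      = m * ((u sa : ℚ) : ℝ) + (q : ℝ) * (g m - g 0) := by
    intro m
    simp only [htform]
    rw [Finset.sum_add_distrib, Finset.sum_const, Finset.card_range, ← Finset.mul_sum,
      Finset.sum_range_sub g]
    simp [nsmul_eq_mul]
  -- the cesaro sequence also converges to u sa
  have hces2 : Tendsto (fun m : ℕ => (m : ℝ)⁻¹ * ∑ j ∈ Finset.range m, t j) atTop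
      (nhds ((u sa : ℚ) : ℝ)) := by
    have hz0 : Tendsto (fun m : ℕ => (m : ℝ)⁻¹ * ((q : ℝ) * (g m - g 0))) atTop (nhds 0) := by
      have hb0 : Tendsto (fun m : ℕ => (q : ℝ) * (2 * (Bz : ℝ)) / m) atTop (nhds 0) :=
        tendsto_const_div_atTop_nhds_zero_nat _
      apply squeeze_zero_norm _ hb0
      intro m
      rcases Nat.eq_zero_or_pos m with hm | hm
      · subst hm; simp
      · rw [norm_mul, norm_inv, Real.norm_natCast, div_eq_inv_mul]
        apply mul_le_mul_of_nonneg_left _ (by positivity)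
        rw [norm_mul, Real.norm_natCast]
        apply mul_le_mul_of_nonneg_left _ (by positivity)
        calc ‖g m - g 0‖ ≤ |g m| + |g 0| := norm_sub_le _ _
          _ ≤ (Bz : ℝ) + (Bz : ℝ) := add_le_add (hgb m) (hgb 0)
          _ = 2 * (Bz : ℝ) := by ring
    have := (tendsto_const_nhds (x := ((u sa : ℚ) : ℝ)) (f := atTop)).add hz0
    rw [add_zero] at this
    refine this.congr' ?_
    filter_upwards [Filter.eventually_ge_atTop 1] with m hm
    have hm0 : (m : ℝ) ≠ 0 := by positivity
    rw [hsum m, mul_add, inv_mul_cancel_left₀ hm0]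
  exact ⟨u sa, tendsto_nhds_unique hces hces2⟩
end

section
/- The characteristic sequence of the set S = {2^n·(2^n − 1) : n ≥ 0}, i.e., the sequence c : ℕ → {0,1} with c_m = 1 if m ∈ S and c_m = 0 otherwise, is not 2-automatic. -/
lemma key_not_in_S (m d p : ℕ) (hm : 1 ≤ m) (hd : 1 ≤ d) :
    2 ^ (m + d) * (2 ^ m - 1) ≠ 2 ^ p * (2 ^ p - 1) := by
  intro h
  have h2m : 2 ≤ 2 ^ m := by
    calc (2:ℕ) = 2 ^ 1 := rfl
    _ ≤ 2 ^ m := Nat.pow_le_pow_right (by norm_num) hm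
  have hoddm : ¬ (2 ∣ (2 ^ m - 1)) := by
    intro hdvd
    have : (2:ℕ) ∣ 2 ^ m := dvd_pow_self 2 (by omega)
    omega
  have hp1 : 1 ≤ p := by
    by_contra hp
    have hp0 : p = 0 := by omega
    subst hp0
    simp at h
    omega
  have h2p : 2 ≤ 2 ^ p := by
    calc (2:ℕ) = 2 ^ 1 := rfl
    _ ≤ 2 ^ p := Nat.pow_le_pow_right (by norm_num) hp1
  have hoddp : ¬ (2 ∣ (2 ^ p - 1)) := by
    intro hdvd
    have : (2:ℕ) ∣ 2 ^ p := dvd_pow_self 2 (by omega)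
    omega
  rcases lt_trichotomy p (m + d) with hlt | heq | hgt
  · -- cancel 2^p : 2^(m+d-p) * (2^m - 1) = 2^p - 1, LHS even, RHS odd
    have hsplit : 2 ^ p * (2 ^ (m + d - p) * (2 ^ m - 1)) = 2 ^ p * (2 ^ p - 1) := by
      rw [← mul_assoc, ← pow_add]
      rw [show p + (m + d - p) = m + d by omega]
      exact h
    have hcanc : 2 ^ (m + d - p) * (2 ^ m - 1) = 2 ^ p - 1 :=
      Nat.eq_of_mul_eq_mul_left (by positivity) hsplit
    apply hoddp
    rw [← hcanc]
    exact Dvd.dvd.mul_right (dvd_pow_self 2 (by omega)) _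
  · subst heq
    have hcanc : 2 ^ m - 1 = 2 ^ (m + d) - 1 :=
      Nat.eq_of_mul_eq_mul_left (by positivity) h
    have h2md : 2 ≤ 2 ^ (m + d) := by
      calc (2:ℕ) = 2 ^ 1 := rfl
      _ ≤ 2 ^ (m + d) := Nat.pow_le_pow_right (by norm_num) (by omega)
    have : (2:ℕ) ^ m = 2 ^ (m + d) := by omega
    have := Nat.pow_right_injective (le_refl 2) this
    omega
  · -- cancel 2^(m+d): 2^m - 1 = 2^(p-(m+d)) * (2^p - 1), RHS even, LHS odd
    have hsplit : 2 ^ (m + d) * (2 ^ m - 1) = 2 ^ (m + d) * (2 ^ (p - (m + d)) * (2 ^ p - 1)) := by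
      rw [← mul_assoc, ← pow_add]
      rw [show m + d + (p - (m + d)) = p by omega]
      exact h
    have hcanc : 2 ^ m - 1 = 2 ^ (p - (m + d)) * (2 ^ p - 1) :=
      Nat.eq_of_mul_eq_mul_left (by positivity) hsplit
    apply hoddm
    rw [hcanc]
    exact Dvd.dvd.mul_right (dvd_pow_self 2 (by omega)) _

theorem char_seq_of_pow_two_mul_pred_not_two_automatic
    (c : ℕ → Fin 2)
    (hc1 : ∀ m : ℕ, (∃ n : ℕ, m = 2 ^ n * (2 ^ n - 1)) → c m = 1)
    (hc0 : ∀ m : ℕ, (¬ ∃ n : ℕ, m = 2 ^ n * (2 ^ n - 1)) → c m = 0) :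
    ¬ IsQAutomatic 2 c := by
  intro hfin
  -- the map j ↦ (n ↦ c (2^j * n)) lands in the finite kernel
  have hmaps : Set.MapsTo (fun j : ℕ => (fun n => c (2 ^ j * n)))
      Set.univ {s : ℕ → Fin 2 | ∃ k r : ℕ, r < 2 ^ k ∧ s = fun n => c (2 ^ k * n + r)} := by
    intro j _
    exact ⟨j, 0, by positivity, by funext n; simp⟩
  obtain ⟨j, -, j', -, hne, heq⟩ :=
    Set.infinite_univ.exists_ne_map_eq_of_mapsTo hmaps hfin
  -- WLOG j < j'
  wlog hlt : j < j' generalizing j j'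
  · exact this j' j hne.symm heq.symm (by omega)
  -- evaluate at n = 2^(j'-j) * (2^j' - 1)
  set n := 2 ^ (j' - j) * (2 ^ j' - 1) with hn
  have h1 : c (2 ^ j * n) = 1 := by
    apply hc1
    refine ⟨j', ?_⟩
    rw [hn, ← mul_assoc, ← pow_add, show j + (j' - j) = j' by omega]
  have h2 : c (2 ^ j' * n) = 1 := by
    have := congrFun heq n
    rw [← this, h1]
  have h3 : ∃ p : ℕ, 2 ^ j' * n = 2 ^ p * (2 ^ p - 1) := by
    by_contra hno
    have := hc0 _ hno
    rw [h2] at this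
    exact absurd this (by decide)
  obtain ⟨p, hp⟩ := h3
  have hform : 2 ^ (j' + (j' - j)) * (2 ^ j' - 1) = 2 ^ p * (2 ^ p - 1) := by
    rw [pow_add, mul_assoc]
    exact hp
  exact key_not_in_S j' (j' - j) p (by omega) (by omega) hform
end

section
/- Let k ≥ 2 and let f : ℕ → ℕ be a k-synchronized function. Then: (a) there is a constant C such that f(n) ≤ C·(n+1) for all n; (b) if f(n)/n → 0 as n → ∞, then f is bounded; (c) if there is a strictly increasing sequence n_1 < n_2 < ⋯ of positive integers with lim_{i → ∞} f(n_i)/n_i = 0, then there is a constant C such that f(n) = C for infinitely many n. -/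
/-- A language is regular if it is accepted by some deterministic finite automaton. -/
def LangIsRegular {α : Type*} (L : Language α) : Prop :=
  ∃ (Q : Type) (_ : Fintype Q) (M : DFA α Q), M.accepts = L

/-- The value of a list of base-`k` digits (least significant digit first). -/
def digitsVal (k : ℕ) (l : List (Fin k)) : ℕ :=
  l.foldr (fun d acc => (d : ℕ) + k * acc) 0

/-- A function `f : ℕ → ℕ` is `k`-synchronized if the language of words over the
alphabet `Fin k × Fin k` spelling out, digit by digit, the base-`k` representations
(allowing padding by leading zeros) of the pairs `(n, f n)` is regular. -/
def IsSynchronized (k : ℕ) (f : ℕ → ℕ) : Prop :=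
  LangIsRegular {w : List (Fin k × Fin k) |
    f (digitsVal k (w.map Prod.fst)) = digitsVal k (w.map Prod.snd)}

namespace SyncAux

variable {k : ℕ}

lemma digitsVal_nil : digitsVal k [] = 0 := rfl

lemma digitsVal_cons (d : Fin k) (l : List (Fin k)) :
    digitsVal k (d :: l) = (d : ℕ) + k * digitsVal k l := rfl

lemma digitsVal_append (x y : List (Fin k)) :
    digitsVal k (x ++ y) = digitsVal k x + k ^ x.length * digitsVal k y := by
  induction x with
  | nil => simp [digitsVal_nil]
  | cons d t ih =>
      simp only [List.cons_append, digitsVal_cons, ih, List.length_cons, pow_succ]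
      ring

def digFin (k : ℕ) (hk : 0 < k) (n i : ℕ) : Fin k := ⟨n / k ^ i % k, Nat.mod_lt _ hk⟩

lemma mod_pow_succ (m L : ℕ) :
    m % k ^ (L + 1) = m % k + k * (m / k % k ^ L) := by
  rw [pow_succ', Nat.mod_mul]

lemma val_digRange (hk : 0 < k) (n a L : ℕ) :
    digitsVal k ((List.range L).map fun i => digFin k hk n (a + i)) = n / k ^ a % k ^ L := by
  induction L generalizing a with
  | zero => simp [digitsVal_nil, Nat.mod_one]
  | succ L ih =>
      rw [List.range_succ_eq_map, List.map_cons, digitsVal_cons, List.map_map]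
      have he : ((fun i => digFin k hk n (a + i)) ∘ Nat.succ) = fun i => digFin k hk n ((a+1) + i) := by
        funext i
        show digFin k hk n (a + Nat.succ i) = digFin k hk n ((a+1) + i)
        congr 1; omega
      rw [he, ih (a+1)]
      have h2 : n / k ^ (a+1) = (n / k ^ a) / k := by
        rw [Nat.div_div_eq_div_mul, pow_succ]
      rw [h2, mod_pow_succ]
      simp [digFin]

/-- The word spelling digits of `(n, m)` from position `a` (inclusive) to `b` (exclusive). -/
def piece (hk : 0 < k) (n m a b : ℕ) : List (Fin k × Fin k) :=
  (List.range (b - a)).map fun i => (digFin k hk n (a + i), digFin k hk m (a + i))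

lemma length_piece (hk : 0 < k) (n m a b : ℕ) : (piece hk n m a b).length = b - a := by
  simp [piece]

lemma map_fst_piece (hk : 0 < k) (n m a b : ℕ) :
    (piece hk n m a b).map Prod.fst = (List.range (b - a)).map fun i => digFin k hk n (a + i) := by
  simp [piece, List.map_map]

lemma map_snd_piece (hk : 0 < k) (n m a b : ℕ) :
    (piece hk n m a b).map Prod.snd = (List.range (b - a)).map fun i => digFin k hk m (a + i) := by
  simp [piece, List.map_map]

lemma fstVal_piece (hk : 0 < k) (n m a b : ℕ) :
    digitsVal k ((piece hk n m a b).map Prod.fst) = n / k ^ a % k ^ (b - a) := by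
  rw [map_fst_piece, val_digRange]

lemma sndVal_piece (hk : 0 < k) (n m a b : ℕ) :
    digitsVal k ((piece hk n m a b).map Prod.snd) = m / k ^ a % k ^ (b - a) := by
  rw [map_snd_piece, val_digRange]

lemma piece_append (hk : 0 < k) (n m : ℕ) {a b c : ℕ} (hab : a ≤ b) (hbc : b ≤ c) :
    piece hk n m a b ++ piece hk n m b c = piece hk n m a c := by
  unfold piece
  rw [show c - a = (b - a) + (c - b) by omega, List.range_add, List.map_append, List.map_map]
  congr 1
  apply List.map_congr_left
  intro i _
  have h : a + (b - a + i) = b + i := by omega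
  simp [Function.comp, h]

def iterSeq (Y B c : ℕ) : ℕ → ℕ
  | 0 => c
  | j + 1 => Y + B * iterSeq Y B c j

lemma one_le_iterSeq {Y B c : ℕ} (hc : 1 ≤ c) (hB : 1 ≤ B) : ∀ j, 1 ≤ iterSeq Y B c j
  | 0 => hc
  | j + 1 => by
      have := one_le_iterSeq (Y := Y) hc hB j
      simp only [iterSeq]
      nlinarith

lemma iterSeq_strictMono {Y B c : ℕ} (hc : 1 ≤ c) (hB : 2 ≤ B) :
    StrictMono (iterSeq Y B c) := by
  apply strictMono_nat_of_lt_succ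
  intro j
  have h1 := one_le_iterSeq (Y := Y) hc (by omega : 1 ≤ B) j
  simp only [iterSeq]
  nlinarith

end SyncAux

open SyncAux in
theorem synchronized_growth
    (k : ℕ) (hk : 2 ≤ k) (f : ℕ → ℕ) (hf : IsSynchronized k f) :
    (∃ C : ℕ, ∀ n : ℕ, f n ≤ C * (n + 1)) ∧
    (Filter.Tendsto (fun n : ℕ => (f n : ℝ) / n) Filter.atTop (nhds 0) →
      ∃ C : ℕ, ∀ n : ℕ, f n ≤ C) ∧
    (∀ g : ℕ → ℕ, StrictMono g → (∀ i, 0 < g i) →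
      Filter.Tendsto (fun i : ℕ => (f (g i) : ℝ) / (g i)) Filter.atTop (nhds 0) →
      ∃ C : ℕ, {n : ℕ | f n = C}.Infinite) := by
  obtain ⟨Q, instQ, M, hM⟩ := hf
  haveI := instQ
  have hk0 : 0 < k := by omega
  have hk1 : 1 < k := hk
  set s := Fintype.card Q with hs
  -- membership characterization
  have hmem : ∀ (w : List (Fin k × Fin k)), w ∈ M.accepts ↔
      f (digitsVal k (w.map Prod.fst)) = digitsVal k (w.map Prod.snd) := by
    intro w; rw [hM]; exact Iff.rfl
  have evalApp : ∀ (x y : List (Fin k × Fin k)),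
      M.eval (x ++ y) = M.evalFrom (M.eval x) y := fun x y =>
    M.evalFrom_of_append M.start x y
  -- acceptance of the canonical word
  have hacc : ∀ n L : ℕ, n < k ^ L → f n < k ^ L →
      piece hk0 n (f n) 0 L ∈ M.accepts := by
    intro n L h1 h2
    rw [hmem, fstVal_piece, sndVal_piece]
    simp only [pow_zero, Nat.div_one, Nat.sub_zero]
    rw [Nat.mod_eq_of_lt h1, Nat.mod_eq_of_lt h2]
  -- pigeonhole on states
  have pigeon : ∀ (n m a : ℕ), ∃ p q, a ≤ p ∧ p < q ∧ q ≤ a + s ∧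
      M.eval (piece hk0 n m 0 p) = M.eval (piece hk0 n m 0 q) := by
    intro n m a
    have hcard : (Finset.univ : Finset Q).card < (Finset.Icc a (a + s)).card := by
      rw [Nat.card_Icc, Finset.card_univ]; omega
    obtain ⟨x, hx, y, hy, hxy, hfe⟩ := Finset.exists_ne_map_eq_of_card_lt_of_maps_to hcard
      (f := fun t => M.eval (piece hk0 n m 0 t)) (fun a _ => Finset.mem_univ _)
    simp only [Finset.mem_Icc] at hx hy
    rcases Nat.lt_or_ge x y with h | h
    · exact ⟨x, y, hx.1, h, hy.2, hfe⟩
    · exact ⟨y, x, hy.1, by omega, hx.2, hfe.symm⟩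
  -- the key pumping lemma
  have u_lemma : ∀ n : ℕ, k ^ (s + 2) ≤ n → f n * k ^ (s + 2) < n →
      ∃ u : ℕ → ℕ, StrictMono u ∧ u 1 = n ∧ ∀ j, f (u j) = f n := by
    intro n h1 h2
    have hn0 : n ≠ 0 := by
      have : 0 < k ^ (s+2) := pow_pos hk0 _
      omega
    set lam := Nat.log k n with hlamdef
    have hlow : k ^ lam ≤ n := Nat.pow_log_le_self k hn0
    have hhigh : n < k ^ (lam + 1) := Nat.lt_pow_succ_log_self hk1 n
    have hlam : s + 2 ≤ lam := by
      by_contra hcon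
      push_neg at hcon
      have : k ^ (lam + 1) ≤ k ^ (s + 2) := Nat.pow_le_pow_right (by omega) (by omega)
      omega
    have hfn : f n < k ^ (lam - s - 1) := by
      have hsplit : k ^ (lam + 1) = k ^ (s + 2) * k ^ (lam - s - 1) := by
        rw [← pow_add]; congr 1; omega
      have : f n * k ^ (s + 2) < k ^ (s + 2) * k ^ (lam - s - 1) := by
        calc f n * k ^ (s+2) < n := h2
          _ < k ^ (lam + 1) := hhigh
          _ = _ := hsplit
      have hkp : 0 < k ^ (s+2) := pow_pos hk0 _
      nlinarith
    obtain ⟨p, q, hp, hpq, hq, heq⟩ := pigeon n (f n) (lam - s)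
    have hq' : q ≤ lam := by omega
    have hfp : f n < k ^ p := by
      calc f n < k ^ (lam - s - 1) := hfn
        _ ≤ k ^ p := Nat.pow_le_pow_right (by omega) (by omega)
    set L := lam + 1 with hL
    have hnL : n < k ^ L := hhigh
    have hfL : f n < k ^ L := by
      calc f n < k ^ p := hfp
        _ ≤ k ^ L := Nat.pow_le_pow_right (by omega) (by omega)
    have hw : piece hk0 n (f n) 0 L ∈ M.accepts := hacc n L hnL hfL
    set X := M.eval (piece hk0 n (f n) 0 p) with hX
    have hloop : M.evalFrom X (piece hk0 n (f n) p q) = X := by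
      rw [hX, ← evalApp, piece_append hk0 n (f n) (by omega) (by omega), ← heq]
    have hXz : M.evalFrom X (piece hk0 n (f n) q L) = M.eval (piece hk0 n (f n) 0 L) := by
      rw [heq, ← evalApp, piece_append hk0 n (f n) (by omega) (by omega)]
    set B := k ^ (q - p) with hB
    set Y := n / k ^ p % k ^ (q - p) with hY
    set c := n / k ^ q with hc
    have hc1 : 1 ≤ c := by
      rw [hc, Nat.one_le_div_iff (pow_pos hk0 _)]
      calc k ^ q ≤ k ^ lam := Nat.pow_le_pow_right (by omega) hq'
        _ ≤ n := hlow
    have hB2 : 2 ≤ B := by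
      calc 2 ≤ k := hk
        _ = k ^ 1 := (pow_one k).symm
        _ ≤ B := Nat.pow_le_pow_right (by omega) (by omega)
    -- the pumped suffixes
    have key : ∀ j : ℕ, ∃ w : List (Fin k × Fin k),
        M.evalFrom X w = M.eval (piece hk0 n (f n) 0 L) ∧
        digitsVal k (w.map Prod.fst) = iterSeq Y B c j ∧
        digitsVal k (w.map Prod.snd) = 0 := by
      intro j
      induction j with
      | zero =>
          refine ⟨piece hk0 n (f n) q L, hXz, ?_, ?_⟩
          · rw [fstVal_piece]
            show n / k ^ q % k ^ (L - q) = c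
            rw [Nat.mod_eq_of_lt]
            rw [Nat.div_lt_iff_lt_mul (pow_pos hk0 _), ← pow_add]
            calc n < k ^ L := hnL
              _ ≤ k ^ (L - q + q) := Nat.pow_le_pow_right (by omega) (by omega)
          · rw [sndVal_piece]
            have : f n / k ^ q = 0 := Nat.div_eq_of_lt (by
              calc f n < k ^ p := hfp
                _ ≤ k ^ q := Nat.pow_le_pow_right (by omega) (by omega))
            simp [this]
      | succ j ih =>
          obtain ⟨w, hweval, hwfst, hwsnd⟩ := ih
          refine ⟨piece hk0 n (f n) p q ++ w, ?_, ?_, ?_⟩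
          · rw [M.evalFrom_of_append, hloop, hweval]
          · rw [List.map_append, digitsVal_append, hwfst, List.length_map, length_piece,
              fstVal_piece]
            show n / k ^ p % k ^ (q - p) + k ^ (q - p) * iterSeq Y B c j = iterSeq Y B c (j+1)
            rfl
          · rw [List.map_append, digitsVal_append, hwsnd, sndVal_piece]
            have : f n / k ^ p = 0 := Nat.div_eq_of_lt hfp
            simp [this]
    refine ⟨fun j => n % k ^ p + k ^ p * iterSeq Y B c j, ?_, ?_, ?_⟩
    · intro i j hij
      have hlt := iterSeq_strictMono (Y := Y) hc1 hB2 hij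
      have hkp : 0 < k ^ p := pow_pos hk0 _
      show n % k ^ p + k ^ p * iterSeq Y B c i < n % k ^ p + k ^ p * iterSeq Y B c j
      exact Nat.add_lt_add_left (mul_lt_mul_of_pos_left hlt hkp) _
    · show n % k ^ p + k ^ p * iterSeq Y B c 1 = n
      have h3 : iterSeq Y B c 1 = Y + B * c := rfl
      rw [h3, hY, hB, hc]
      have h4 : n / k ^ q = n / k ^ p / k ^ (q - p) := by
        rw [Nat.div_div_eq_div_mul, ← pow_add, show p + (q - p) = q by omega]
      rw [h4, Nat.mod_add_div, Nat.mod_add_div]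
    · intro j
      obtain ⟨w, hweval, hwfst, hwsnd⟩ := key j
      have hacc' : piece hk0 n (f n) 0 p ++ w ∈ M.accepts := by
        rw [DFA.mem_accepts, evalApp, ← hX, hweval, ← DFA.mem_accepts]
        exact hw
      rw [hmem] at hacc'
      rw [List.map_append, List.map_append, digitsVal_append, digitsVal_append,
        hwfst, hwsnd, List.length_map, List.length_map, length_piece,
        fstVal_piece, sndVal_piece] at hacc'
      simp only [pow_zero, Nat.div_one, Nat.sub_zero, mul_zero, add_zero] at hacc'
      rw [Nat.mod_eq_of_lt hfp] at hacc'
      exact hacc'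
  -- a helper for converting the real inequality
  have realstep : ∀ n : ℕ, 0 < n → (f n : ℝ) / n < ((k : ℝ) ^ (s + 2))⁻¹ →
      f n * k ^ (s + 2) < n := by
    intro n hn h
    have hnR : (0 : ℝ) < n := by exact_mod_cast hn
    have hkR : (0 : ℝ) < (k : ℝ) ^ (s + 2) := by positivity
    rw [inv_eq_one_div, div_lt_div_iff₀ hnR hkR] at h
    have : (f n : ℝ) * (k : ℝ) ^ (s + 2) < n := by linarith
    exact_mod_cast this
  refine ⟨⟨k ^ (s + 1), fun n => ?_⟩, ?_, ?_⟩
  -- part (a)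
  · by_contra hcon
    push_neg at hcon
    have hfn0 : f n ≠ 0 := by
      have : 0 < k ^ (s + 1) * (n + 1) := by positivity
      omega
    set lam := Nat.log k (f n) with hlamdef
    have hlow : k ^ lam ≤ f n := Nat.pow_log_le_self k hfn0
    have hhigh : f n < k ^ (lam + 1) := Nat.lt_pow_succ_log_self hk1 (f n)
    have hlam : s + 1 ≤ lam := by
      by_contra hc2
      push_neg at hc2
      have h3 : k ^ (lam + 1) ≤ k ^ (s + 1) := Nat.pow_le_pow_right (by omega) (by omega)
      nlinarith
    have hnlt : n < k ^ (lam - s) := by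
      have hsplit : k ^ (lam + 1) = k ^ (s + 1) * k ^ (lam - s) := by
        rw [← pow_add]; congr 1; omega
      have h4 : k ^ (s+1) * (n + 1) < k ^ (s+1) * k ^ (lam - s) := by
        calc k ^ (s+1) * (n+1) < f n := hcon
          _ < k ^ (lam + 1) := hhigh
          _ = _ := hsplit
      have hkp : 0 < k ^ (s + 1) := pow_pos hk0 _
      nlinarith
    obtain ⟨p, q, hp, hpq, hq, heq⟩ := pigeon n (f n) (lam + 1 - s)
    have hq' : q ≤ lam + 1 := by omega
    have hnp : n < k ^ p := by
      calc n < k ^ (lam - s) := hnlt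
        _ ≤ k ^ p := Nat.pow_le_pow_right (by omega) (by omega)
    set L := lam + 1 with hL
    have hnL : n < k ^ L := by
      calc n < k ^ p := hnp
        _ ≤ k ^ L := Nat.pow_le_pow_right (by omega) (by omega)
    have hw : piece hk0 n (f n) 0 L ∈ M.accepts := hacc n L hnL hhigh
    -- pumped-down word
    have haccpd : piece hk0 n (f n) 0 p ++ piece hk0 n (f n) q L ∈ M.accepts := by
      rw [DFA.mem_accepts, evalApp, heq, ← evalApp,
        piece_append hk0 n (f n) (by omega) (by omega), ← DFA.mem_accepts]
      exact hw
    rw [hmem] at haccpd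
    rw [List.map_append, List.map_append, digitsVal_append, digitsVal_append,
      List.length_map, List.length_map, length_piece,
      fstVal_piece, fstVal_piece, sndVal_piece, sndVal_piece] at haccpd
    simp only [pow_zero, Nat.div_one, Nat.sub_zero] at haccpd
    rw [Nat.mod_eq_of_lt hnp] at haccpd
    have hnq0 : n / k ^ q = 0 := Nat.div_eq_of_lt (by
      calc n < k ^ p := hnp
        _ ≤ k ^ q := Nat.pow_le_pow_right (by omega) (by omega))
    rw [hnq0] at haccpd
    simp only [Nat.zero_mod, mul_zero, add_zero] at haccpd
    -- haccpd : f n = f n % k ^ p + k ^ p * (f n / k ^ q % k ^ (L - q))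
    have hfq : f n / k ^ q % k ^ (L - q) = f n / k ^ q := by
      rw [Nat.mod_eq_of_lt]
      rw [Nat.div_lt_iff_lt_mul (pow_pos hk0 _), ← pow_add]
      calc f n < k ^ L := hhigh
        _ ≤ k ^ (L - q + q) := Nat.pow_le_pow_right (by omega) (by omega)
    rw [hfq] at haccpd
    have hsame : f n / k ^ p = f n / k ^ q := by
      have hmd := Nat.mod_add_div (f n) (k ^ p)
      have hmul : k ^ p * (f n / k ^ p) = k ^ p * (f n / k ^ q) := by omega
      exact Nat.eq_of_mul_eq_mul_left (pow_pos hk0 _) hmul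
    have ht1 : 1 ≤ f n / k ^ p := by
      rw [Nat.one_le_div_iff (pow_pos hk0 _)]
      calc k ^ p ≤ k ^ lam := Nat.pow_le_pow_right (by omega) (by omega)
        _ ≤ f n := hlow
    have ht2 : f n / k ^ q ≤ f n / k ^ (p + 1) :=
      Nat.div_le_div_left (Nat.pow_le_pow_right (by omega) (by omega)) (pow_pos hk0 _)
    have ht3 : f n / k ^ (p + 1) = (f n / k ^ p) / k := by
      rw [Nat.div_div_eq_div_mul, pow_succ]
    have ht4 : (f n / k ^ p) / k < f n / k ^ p := Nat.div_lt_self (by omega) hk1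
    omega
  -- part (b)
  · intro htend
    have hev := htend.eventually_lt_const (show (0:ℝ) < ((k:ℝ) ^ (s+2))⁻¹ by positivity)
    obtain ⟨N, hN⟩ := Filter.eventually_atTop.mp hev
    set N' := max N (k ^ (s + 2)) + 1 with hN'
    have hcond : ∀ n, N' ≤ n → k ^ (s + 2) ≤ n ∧ f n * k ^ (s + 2) < n := by
      intro n hn
      have h1 : k ^ (s + 2) ≤ n := by omega
      have h2 : N ≤ n := by omega
      have h3 : 0 < n := by
        have : 0 < k ^ (s+2) := pow_pos hk0 _
        omega
      exact ⟨h1, realstep n h3 (hN n h2)⟩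
    refine ⟨(Finset.range N').sup f, fun n => ?_⟩
    induction n using Nat.strong_induction_on with
    | _ n ih =>
      by_cases hn : n < N'
      · exact Finset.le_sup (Finset.mem_range.mpr hn)
      · push_neg at hn
        obtain ⟨u, hu, hu1, huf⟩ := u_lemma n (hcond n hn).1 (hcond n hn).2
        have h0 : u 0 < n := by
          rw [← hu1]; exact hu one_pos
        calc f n = f (u 0) := (huf 0).symm
          _ ≤ _ := ih (u 0) h0
  -- part (c)
  · intro g hg hgpos htend
    have hev := htend.eventually_lt_const (show (0:ℝ) < ((k:ℝ) ^ (s+2))⁻¹ by positivity)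
    have hev2 := hg.tendsto_atTop.eventually_ge_atTop (k ^ (s + 2))
    obtain ⟨i, h1, h2⟩ := (hev.and hev2).exists
    obtain ⟨u, hu, hu1, huf⟩ := u_lemma (g i) h2 (realstep (g i) (hgpos i) h1)
    exact ⟨f (g i), Set.infinite_of_injective_forall_mem hu.injective huf⟩
end

section
/- Let q ≥ 2 and let a be a q-automatic sequence with values in a finite alphabet A. Then the factor complexity of a is in O(n): there exists a constant C such that for all n ≥ 1, the number of distinct words of length n occurring as factors of a is at most C·n. -/
theorem factor_complexity_of_automatic_linear
    {A : Type*} [Fintype A] (q : ℕ) (hq : 2 ≤ q) (a : ℕ → A)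
    (ha : IsQAutomatic q a) :
    ∃ C : ℕ, ∀ n : ℕ, 1 ≤ n →
      Set.ncard {w : Fin n → A | ∃ m : ℕ, ∀ i : Fin n, a (m + i) = w i} ≤ C * n := by
  classical
  set K : Finset (ℕ → A) := ha.toFinset with hKdef
  refine ⟨q * Fintype.card ({s // s ∈ K} → A × A), fun n hn => ?_⟩
  set k := Nat.clog q n with hk
  set Q := q ^ k with hQ
  have hQpos : 0 < Q := pow_pos (by omega) k
  have hnQ : n ≤ Q := Nat.le_pow_clog (by omega) n
  have hQqn : Q ≤ q * n := by
    rcases eq_or_lt_of_le hn with h1 | h2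
    · have : k = 0 := by rw [hk, ← h1, Nat.clog_one_right]
      have hQ1 : Q = 1 := by rw [hQ, this, pow_zero]
      rw [hQ1]
      exact Nat.mul_pos (by omega) hn
    · have hkpos : 0 < k := Nat.clog_pos (by omega) h2
      have hlt : q ^ (k - 1) < n := Nat.pow_pred_clog_lt_self (by omega) h2
      calc Q = q * q ^ (k - 1) := by
              rw [hQ, ← pow_succ']
              congr 1
              omega
        _ ≤ q * n := Nat.mul_le_mul_left q (by omega)
  have hmem : ∀ u : ℕ, u < Q → (fun x => a (Q * x + u)) ∈ K := by
    intro u hu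
    rw [hKdef]
    apply (Set.Finite.mem_toFinset (hs := ha)).mpr
    exact ⟨k, u, hu, rfl⟩
  set Φ : Fin Q × ({s // s ∈ K} → A × A) → (Fin n → A) := fun p t =>
    if ((p.1 : ℕ) + (t : ℕ)) / Q = 0 then
      (p.2 ⟨fun x => a (Q * x + ((p.1 : ℕ) + (t : ℕ)) % Q),
        hmem _ (Nat.mod_lt _ hQpos)⟩).1
    else
      (p.2 ⟨fun x => a (Q * x + ((p.1 : ℕ) + (t : ℕ)) % Q),
        hmem _ (Nat.mod_lt _ hQpos)⟩).2
    with hΦ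
  have hsub : {w : Fin n → A | ∃ m : ℕ, ∀ i : Fin n, a (m + i) = w i} ⊆ Set.range Φ := by
    rintro w ⟨m, hm⟩
    refine ⟨⟨⟨m % Q, Nat.mod_lt _ hQpos⟩,
      fun s => (s.1 (m / Q), s.1 (m / Q + 1))⟩, ?_⟩
    funext t
    have ht : (t : ℕ) < n := t.2
    have hiQ : m % Q < Q := Nat.mod_lt _ hQpos
    have hdm : Q * (m / Q) + m % Q = m := Nat.div_add_mod m Q
    have hdm2 : Q * ((m % Q + (t : ℕ)) / Q) + (m % Q + (t : ℕ)) % Q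
        = m % Q + (t : ℕ) := Nat.div_add_mod _ _
    have he2 : (m % Q + (t : ℕ)) / Q < 2 := by
      apply Nat.div_lt_of_lt_mul
      omega
    have key : m + (t : ℕ)
        = Q * (m / Q + (m % Q + (t : ℕ)) / Q) + (m % Q + (t : ℕ)) % Q := by
      rw [Nat.mul_add]
      omega
    rw [hΦ]
    simp only []
    have he2' : (m % Q + (t : ℕ)) / Q = 0 ∨ (m % Q + (t : ℕ)) / Q = 1 :=
      by rcases Nat.lt_or_ge ((m % Q + (t : ℕ)) / Q) 1 with h | h
         · exact Or.inl (Nat.lt_one_iff.mp h)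
         · exact Or.inr (le_antisymm (Nat.lt_succ_iff.mp he2) h)
    rcases he2' with he | he
    · rw [if_pos (by simpa using he)]
      have := hm t
      rw [← this, key, he]
      simp
    · rw [if_neg (by simp [he])]
      have := hm t
      rw [← this, key, he]
  have hfin : (Set.range Φ).Finite := Set.finite_range Φ
  calc Set.ncard {w : Fin n → A | ∃ m : ℕ, ∀ i : Fin n, a (m + i) = w i}
      ≤ (Set.range Φ).ncard := Set.ncard_le_ncard hsub hfin
    _ ≤ Fintype.card (Fin Q × ({s // s ∈ K} → A × A)) := by
        rw [← Set.image_univ]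
        calc (Set.image Φ Set.univ).ncard ≤ (Set.univ : Set (Fin Q × ({s // s ∈ K} → A × A))).ncard :=
              Set.ncard_image_le Set.finite_univ
          _ = _ := by rw [Set.ncard_univ, Nat.card_eq_fintype_card]
    _ = Q * Fintype.card ({s // s ∈ K} → A × A) := by
        rw [Fintype.card_prod, Fintype.card_fin]
    _ ≤ (q * n) * Fintype.card ({s // s ∈ K} → A × A) :=
        Nat.mul_le_mul_right _ hQqn
    _ = (q * Fintype.card ({s // s ∈ K} → A × A)) * n := by ring
end

section
/- Let x = (x_n)_{n ≥ 0} be a k-automatic sequence (k ≥ 2) with values in a finite alphabet Δ, and let d ∈ Δ be a value occurring infinitely often in x. Let α_j denote the position of the j-th occurrence of d in x. Then either limsup_{n → ∞} #{i < n : x_i = d} / log n < ∞, or liminf_{j → ∞} (α_{j+1} − α_j) < ∞ (or both). -/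
theorem cobham_gap_theorem
    {Δ : Type*} [Fintype Δ] (k : ℕ) (hk : 2 ≤ k) (x : ℕ → Δ)
    (hx : IsQAutomatic k x) (d : Δ)
    (α : ℕ → ℕ) (hmono : StrictMono α) (hocc : ∀ j, x (α j) = d)
    (hall : ∀ n, x n = d → ∃ j, α j = n) :
    (∃ C : ℝ, ∀ n : ℕ, 2 ≤ n →
      (Set.ncard {i : ℕ | i < n ∧ x i = d} : ℝ) ≤ C * Real.log n) ∨
    (∃ C : ℕ, {j : ℕ | α (j + 1) - α j ≤ C}.Infinite) := by
  classical
  set K : Set (ℕ → Δ) := {s | ∃ m r : ℕ, r < k ^ m ∧ s = fun n => x (k ^ m * n + r)} with hKdef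
  haveI : Finite ↥K := hx.to_subtype
  set f : ℕ → (↥K → Δ) := fun n s => s.1 n with hfdef
  -- Equal fingerprints give equal blocks at every scale.
  have hA : ∀ n₁ n₂, f n₁ = f n₂ → ∀ m r, r < k ^ m →
      x (k ^ m * n₁ + r) = x (k ^ m * n₂ + r) := by
    intro n₁ n₂ h m r hr
    have hs : (fun n => x (k ^ m * n + r)) ∈ K := ⟨m, r, hr, rfl⟩
    exact congrFun h ⟨_, hs⟩
  -- All sufficiently large indices are "recurrent".
  have htrans : {n | (f ⁻¹' {f n}).Finite}.Finite := by
    have hsub : {n | (f ⁻¹' {f n}).Finite} ⊆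
        ⋃ v ∈ {v ∈ Set.range f | (f ⁻¹' {v}).Finite}, f ⁻¹' {v} := by
      intro n hn
      exact Set.mem_biUnion ⟨⟨n, rfl⟩, hn⟩ rfl
    refine Set.Finite.subset ?_ hsub
    have hrf : (Set.range f).Finite := Set.finite_univ.subset (Set.subset_univ _)
    apply Set.Finite.biUnion (hrf.subset (Set.sep_subset _ _))
    intro v hv
    exact hv.2
  obtain ⟨M0', hM0'⟩ := htrans.bddAbove
  set M0 : ℕ := max (M0' + 1) 1 with hM0def
  have hM0pos : 1 ≤ M0 := le_max_right _ _
  have hM0rec : ∀ n, M0 ≤ n → (f ⁻¹' {f n}).Infinite := by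
    intro n hn
    by_contra h
    rw [Set.not_infinite] at h
    have h2 : n ≤ M0' := hM0' h
    have h3 : M0' + 1 ≤ M0 := le_max_left _ _
    omega
  -- Counting functions
  set c : ℕ → ℕ := fun N => ((Finset.range N).filter (fun i => x i = d)).card with hcdef
  set T : ℕ → ℕ → ℕ := fun m n =>
    ((Finset.Ico (k ^ m * n) (k ^ m * (n + 1))).filter (fun i => x i = d)).card with hTdef
  have hkpow : ∀ m : ℕ, 1 ≤ k ^ m := fun m => Nat.one_le_pow _ _ (by omega)
  -- decomposition of counts into blocks
  have hsum : ∀ m t : ℕ, c (k ^ m * t) = ∑ n ∈ Finset.range t, T m n := by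
    intro m t
    induction t with
    | zero => simp [hcdef]
    | succ t ih =>
      have hle : k ^ m * t ≤ k ^ m * (t + 1) := Nat.mul_le_mul_left _ (by omega)
      have hr : Finset.range (k ^ m * (t + 1)) =
          Finset.range (k ^ m * t) ∪ Finset.Ico (k ^ m * t) (k ^ m * (t + 1)) := by
        rw [Finset.range_eq_Ico, Finset.range_eq_Ico, Finset.Ico_union_Ico_eq_Ico (Nat.zero_le _) hle]
      have hdisj : Disjoint (Finset.range (k ^ m * t))
          (Finset.Ico (k ^ m * t) (k ^ m * (t + 1))) := by
        rw [Finset.range_eq_Ico]; exact Finset.Ico_disjoint_Ico_consecutive _ _ _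
      calc c (k ^ m * (t + 1))
          = (((Finset.range (k ^ m * t)).filter (fun i => x i = d)) ∪
             ((Finset.Ico (k ^ m * t) (k ^ m * (t + 1))).filter (fun i => x i = d))).card := by
            rw [hcdef]; simp only; rw [hr, Finset.filter_union]
        _ = c (k ^ m * t) + T m t :=
            Finset.card_union_of_disjoint (Finset.disjoint_filter_filter hdisj)
        _ = ∑ n ∈ Finset.range (t + 1), T m n := by rw [ih, Finset.sum_range_succ]
  by_cases hP : ∃ m n, M0 ≤ n ∧ 2 ≤ T m n
  · -- bounded gaps infinitely often
    obtain ⟨m, n, hn, h2⟩ := hP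
    refine Or.inr ⟨k ^ m, ?_⟩
    refine Set.infinite_of_not_bddAbove ?_
    rintro ⟨J, hJ⟩
    have h2' : 1 < ((Finset.Ico (k ^ m * n) (k ^ m * (n + 1))).filter
        (fun i => x i = d)).card := h2
    obtain ⟨p, hp, q, hq, hpq⟩ := Finset.one_lt_card.mp h2'
    rw [Finset.mem_filter, Finset.mem_Ico] at hp hq
    have main : ∀ p q : ℕ, k ^ m * n ≤ p → q < k ^ m * (n + 1) → p < q →
        x p = d → x q = d → False := by
      intro p q hp1 hq2 hlt hxp hxq
      obtain ⟨n', hn', hgt⟩ := (hM0rec n hn).exists_gt (α J)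
      have hfn : f n = f n' := hn'.symm
      set r₁ := p - k ^ m * n with hr₁
      set r₂ := q - k ^ m * n with hr₂
      have hpv : p = k ^ m * n + r₁ := by omega
      have hqv : q = k ^ m * n + r₂ := by omega
      have hr₂lt : r₂ < k ^ m := by
        have : k ^ m * (n + 1) = k ^ m * n + k ^ m := by ring
        omega
      have hr₁lt : r₁ < k ^ m := by omega
      have hx₁ : x (k ^ m * n' + r₁) = d := by
        rw [← hA n n' hfn m r₁ hr₁lt, ← hpv, hxp]
      have hx₂ : x (k ^ m * n' + r₂) = d := by
        rw [← hA n n' hfn m r₂ hr₂lt, ← hqv, hxq]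
      obtain ⟨j, hj⟩ := hall _ hx₁
      obtain ⟨j₂, hj₂⟩ := hall _ hx₂
      have hjlt : j < j₂ := by
        have : α j < α j₂ := by rw [hj, hj₂]; omega
        exact hmono.lt_iff_lt.mp this
      have hsucc : α (j + 1) ≤ α j₂ := hmono.monotone (by omega)
      have hmem : j ∈ {j : ℕ | α (j + 1) - α j ≤ k ^ m} := by
        simp only [Set.mem_setOf_eq]
        omega
      have hjle : j ≤ J := hJ hmem
      have hn'le : n' ≤ k ^ m * n' := Nat.le_mul_of_pos_left _ (by have := hkpow m; omega)
      have : α J < α j := by omega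
      have : J < j := hmono.lt_iff_lt.mp this
      omega
    rcases hpq.lt_or_gt with hlt | hlt
    · exact main p q hp.1.1 hq.1.2 hlt hp.2 hq.2
    · exact main q p hq.1.1 hp.1.2 hlt hq.2 hp.2
  · -- logarithmic growth
    push_neg at hP
    have hS : ∀ m, c (k ^ m * M0) ≤ M0 + m * ((k - 1) * M0) := by
      intro m
      induction m with
      | zero =>
        simpa using (Finset.card_filter_le (Finset.range (1 * M0)) _).trans (by simp)
      | succ m ih =>
        have heq : k ^ (m + 1) * M0 = k ^ m * (k * M0) := by ring
        have hMle : M0 ≤ k * M0 := Nat.le_mul_of_pos_left _ (by omega)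
        have hsplit : ∑ n ∈ Finset.range (k * M0), T m n =
            ∑ n ∈ Finset.range M0, T m n + ∑ n ∈ Finset.Ico M0 (k * M0), T m n := by
          rw [Finset.range_eq_Ico, ← Finset.sum_Ico_consecutive (T m) (Nat.zero_le M0) hMle, Finset.range_eq_Ico]
        have hbound : ∑ n ∈ Finset.Ico M0 (k * M0), T m n ≤ (k - 1) * M0 := by
          have := Finset.sum_le_card_nsmul (Finset.Ico M0 (k * M0)) (T m) 1
            (fun n hn => by
              have hn' : M0 ≤ n := (Finset.mem_Ico.mp hn).1
              have := hP m n hn'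
              omega)
          simp only [Nat.card_Ico, smul_eq_mul, mul_one] at this
          rw [Nat.sub_mul, one_mul]
          exact this
        calc c (k ^ (m + 1) * M0) = ∑ n ∈ Finset.range (k * M0), T m n := by
              rw [heq, hsum]
          _ = c (k ^ m * M0) + ∑ n ∈ Finset.Ico M0 (k * M0), T m n := by
              rw [hsplit, hsum]
          _ ≤ (M0 + m * ((k - 1) * M0)) + (k - 1) * M0 := Nat.add_le_add ih hbound
          _ = M0 + (m + 1) * ((k - 1) * M0) := by ring
    refine Or.inl ⟨(↑(k * M0) : ℝ) / Real.log 2 + (↑(k * M0) : ℝ) / Real.log k, ?_⟩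
    intro n hn
    set B := Nat.log k n with hBdef
    set m := B + 1 with hmdef
    have h1 : n < k ^ m := Nat.lt_pow_succ_log_self (by omega) n
    have h2 : n ≤ k ^ m * M0 := le_trans h1.le (Nat.le_mul_of_pos_right _ hM0pos)
    have hset : {i : ℕ | i < n ∧ x i = d} =
        ↑((Finset.range n).filter (fun i => x i = d)) := by
      ext i
      simp [Finset.mem_filter, Finset.mem_range]
    rw [hset, Set.ncard_coe_finset]
    have hcn : ((Finset.range n).filter (fun i => x i = d)).card ≤ c (k ^ m * M0) :=
      Finset.card_le_card (Finset.filter_subset_filter _ (Finset.range_subset_range.mpr h2))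
    have hnat : ((Finset.range n).filter (fun i => x i = d)).card ≤ k * M0 + B * (k * M0) := by
      have := hS m
      have hstep : M0 + m * ((k - 1) * M0) ≤ k * M0 + B * (k * M0) := by
        have h3 : (k - 1) * M0 ≤ k * M0 := Nat.mul_le_mul_right _ (by omega)
        have h4 : m * ((k - 1) * M0) = (k - 1) * M0 + B * ((k - 1) * M0) := by
          rw [hmdef]; ring
        have h5 : B * ((k - 1) * M0) ≤ B * (k * M0) := Nat.mul_le_mul_left _ h3
        have h6 : M0 + (k - 1) * M0 ≤ k * M0 := by
          have : M0 + (k - 1) * M0 = (1 + (k - 1)) * M0 := by ring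
          rw [this]
          exact Nat.mul_le_mul_right _ (by omega)
        omega
      omega
    -- move to ℝ
    have hlog2pos : (0 : ℝ) < Real.log 2 := Real.log_pos (by norm_num)
    have hlogkpos : (0 : ℝ) < Real.log k := Real.log_pos (by exact_mod_cast by omega)
    have hL2 : Real.log 2 ≤ Real.log n :=
      Real.log_le_log (by norm_num) (by exact_mod_cast hn)
    have hBlk : (B : ℝ) * Real.log k ≤ Real.log n := by
      have hpow : (k : ℝ) ^ B ≤ (n : ℝ) := by
        exact_mod_cast Nat.pow_log_le_self k (by omega : n ≠ 0)
      have := Real.log_le_log (by positivity) hpow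
      rwa [Real.log_pow] at this
    set A : ℝ := (↑(k * M0) : ℝ) with hAdef
    have hApos : (0 : ℝ) ≤ A := by positivity
    have h5 : (((Finset.range n).filter (fun i => x i = d)).card : ℝ) ≤ A + (B : ℝ) * A := by
      rw [hAdef]
      exact_mod_cast hnat
    have h6 : A ≤ A / Real.log 2 * Real.log n := by
      rw [div_mul_eq_mul_div, le_div_iff₀ hlog2pos]
      calc A * Real.log 2 ≤ A * Real.log n := mul_le_mul_of_nonneg_left hL2 hApos
        _ = A * Real.log n := rfl
    have h7 : (B : ℝ) * A ≤ A / Real.log k * Real.log n := by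
      rw [div_mul_eq_mul_div, le_div_iff₀ hlogkpos, mul_comm ((B : ℝ)) A, mul_assoc]
      exact mul_le_mul_of_nonneg_left hBlk hApos
    calc (((Finset.range n).filter (fun i => x i = d)).card : ℝ)
        ≤ A + (B : ℝ) * A := h5
      _ ≤ A / Real.log 2 * Real.log n + A / Real.log k * Real.log n := add_le_add h6 h7
      _ = (A / Real.log 2 + A / Real.log k) * Real.log n := by ring
end

section
/- Let p be a polynomial with rational coefficients such that p(ℕ) ⊆ ℕ, and let k ≥ 2 be an integer. Then the characteristic sequence of the set {p(i) : i ≥ 0} is k-automatic if and only if deg p < 2. -/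
open Polynomial Filter


lemma evper_automatic (q T B : ℕ) (hT : 1 ≤ T) (c : ℕ → Fin 2)
    (hper : ∀ m, B ≤ m → c (m + T) = c m) : IsQAutomatic q c := by
  -- c has period T beyond B, also all multiples
  have hmul : ∀ j m, B ≤ m → c (m + j * T) = c m := by
    intro j
    induction j with
    | zero => simp
    | succ j ih =>
      intro m hm
      have : m + (j+1) * T = (m + j * T) + T := by ring
      rw [this, hper _ (le_trans hm (Nat.le_add_right _ _)), ih m hm]
  -- every kernel element s satisfies ∀ n ≥ B, s (n+T) = s n
  set P : Set (ℕ → Fin 2) := {s | ∀ n, B ≤ n → s (n + T) = s n} with hP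
  have hfin : P.Finite := by
    have hinj : Set.InjOn (fun (s : ℕ → Fin 2) => fun i : Fin (B + T) => s i) P := by
      intro s hs t ht hst
      have key : ∀ s : ℕ → Fin 2, s ∈ P → ∀ m : ℕ, s (B + m) = s (B + m % T) := by
        intro s hs m
        induction m using Nat.strong_induction_on with
        | _ m ih =>
          rcases lt_or_ge m T with h | h
          · rw [Nat.mod_eq_of_lt h]
          · have h1 : m % T = (m - T) % T := by
              conv_lhs => rw [← Nat.sub_add_cancel h]
              rw [Nat.add_mod_right]
            have h2 : B + m = (B + (m - T)) + T := by omega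
            rw [h2, hs _ (Nat.le_add_right _ _), ih (m - T) (by omega), h1]
      have hval : ∀ n : ℕ, n < B + T → s n = t n := by
        intro n hn
        have := congrFun hst ⟨n, hn⟩
        simpa using this
      funext n
      rcases lt_or_ge n (B + T) with h | h
      · exact hval n h
      · have hn : n = B + (n - B) := by omega
        rw [hn, key s hs, key t ht]
        apply hval
        have : (n - B) % T < T := Nat.mod_lt _ hT
        omega
    have : Finite (Fin (B + T) → Fin 2) := by infer_instance
    exact Set.Finite.of_finite_image (Set.toFinite _) hinj
  apply hfin.subset
  rintro s ⟨t, r, hr, rfl⟩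
  intro n hn
  simp only
  have h1 : q ^ t * (n + T) + r = (q ^ t * n + r) + q ^ t * T := by ring
  rw [h1, hmul (q ^ t)]
  calc B ≤ n := hn
    _ ≤ q ^ t * n + r := by
        have : 1 ≤ q ^ t := Nat.one_le_iff_ne_zero.mpr (by
          intro h
          rw [h] at hr; omega)
        nlinarith



lemma ev_ge (h : Polynomial ℚ) (h1 : 0 < h.degree) (h2 : 0 ≤ h.leadingCoeff) (C : ℚ) :
    ∃ N : ℕ, ∀ n : ℕ, N ≤ n → C ≤ h.eval (n : ℚ) := by
  have t1 : Tendsto (fun x : ℚ => h.eval x) atTop atTop :=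
    Polynomial.tendsto_atTop_of_leadingCoeff_nonneg h h1 h2
  have t2 : Tendsto (fun n : ℕ => h.eval (n : ℚ)) atTop atTop :=
    t1.comp tendsto_natCast_atTop_atTop
  obtain ⟨N, hN⟩ := (tendsto_atTop.mp t2 C).exists_forall_of_atTop
  exact ⟨N, hN⟩

lemma hasse_top (p : Polynomial ℚ) : hasseDeriv p.natDegree p = C p.leadingCoeff := by
  ext m
  rw [hasseDeriv_coeff]
  rcases Nat.eq_zero_or_pos m with rfl | hm
  · rw [Nat.zero_add, Nat.choose_self, coeff_C, if_pos rfl, Nat.cast_one, one_mul]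
    rfl
  · rw [coeff_C, if_neg (by omega), coeff_eq_zero_of_natDegree_lt (by omega), mul_zero]

lemma hasse_gt (p : Polynomial ℚ) (n : ℕ) (hn : p.natDegree < n) : hasseDeriv n p = 0 := by
  ext m
  rw [hasseDeriv_coeff, coeff_eq_zero_of_natDegree_lt (by omega), mul_zero, coeff_zero]

lemma diff_poly_facts (p : Polynomial ℚ) (hd : 2 ≤ p.natDegree) :
    ((taylor (1:ℚ)) p - p).natDegree = p.natDegree - 1 ∧
    ((taylor (1:ℚ)) p - p).leadingCoeff = (p.natDegree : ℚ) * p.leadingCoeff := by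
  have hcoeff : ∀ n, ((taylor (1:ℚ)) p - p).coeff n = ((hasseDeriv n p).eval 1) - p.coeff n := by
    intro n
    rw [coeff_sub, taylor_coeff]
  have hcd1 : ((taylor (1:ℚ)) p - p).coeff (p.natDegree - 1)
      = (p.natDegree : ℚ) * p.leadingCoeff := by
    rw [hcoeff]
    have hle : (hasseDeriv (p.natDegree-1) p).natDegree ≤ 1 := by
      have := Polynomial.natDegree_hasseDeriv_le p (p.natDegree - 1)
      omega
    have hrep := Polynomial.eq_X_add_C_of_natDegree_le_one hle
    have h1 : (hasseDeriv (p.natDegree-1) p).coeff 1 = (p.natDegree : ℚ) * p.leadingCoeff := by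
      rw [hasseDeriv_coeff]
      have he : 1 + (p.natDegree - 1) = p.natDegree := by omega
      rw [he]
      have hch : p.natDegree.choose (p.natDegree - 1) = p.natDegree := by
        have h2 := Nat.choose_symm (n := p.natDegree) (k := 1) (by omega)
        rw [Nat.choose_one_right] at h2
        exact h2
      rw [hch]
      rfl
    have h0 : (hasseDeriv (p.natDegree-1) p).coeff 0 = p.coeff (p.natDegree - 1) := by
      rw [hasseDeriv_coeff, Nat.zero_add, Nat.choose_self, Nat.cast_one, one_mul]
    conv_lhs => rw [hrep]
    rw [eval_add, eval_mul, eval_C, eval_C, eval_X, h1, h0]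
    ring
  have htop : ∀ n, p.natDegree - 1 < n → ((taylor (1:ℚ)) p - p).coeff n = 0 := by
    intro n hn
    rw [hcoeff]
    rcases Nat.eq_or_lt_of_le (show p.natDegree ≤ n by omega) with heq | h'
    · rw [← heq, hasse_top, eval_C,
        show p.leadingCoeff = p.coeff p.natDegree from rfl, sub_self]
    · rw [hasse_gt p n h', coeff_eq_zero_of_natDegree_lt (by omega)]
      simp
  have hle : ((taylor (1:ℚ)) p - p).natDegree ≤ p.natDegree - 1 :=
    natDegree_le_iff_coeff_eq_zero.mpr htop
  have hne : ((taylor (1:ℚ)) p - p).coeff (p.natDegree - 1) ≠ 0 := by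
    rw [hcd1]
    have hp0 : p ≠ 0 := by
      intro h; rw [h] at hd; simp at hd
    have h1 : p.leadingCoeff ≠ 0 := leadingCoeff_ne_zero.mpr hp0
    have h2 : (p.natDegree : ℚ) ≠ 0 := Nat.cast_ne_zero.mpr (by omega)
    exact mul_ne_zero h2 h1
  have heq : ((taylor (1:ℚ)) p - p).natDegree = p.natDegree - 1 :=
    le_antisymm hle (le_natDegree_of_ne_zero hne)
  refine ⟨heq, ?_⟩
  rw [Polynomial.leadingCoeff, heq, hcd1]


lemma easy_dir (p : Polynomial ℚ) (hp : ∀ n : ℕ, ∃ m : ℕ, p.eval (n : ℚ) = (m : ℚ))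
    (c : ℕ → Fin 2)
    (hc1 : ∀ m : ℕ, (∃ i : ℕ, p.eval (i : ℚ) = (m : ℚ)) → c m = 1)
    (hc0 : ∀ m : ℕ, (¬ ∃ i : ℕ, p.eval (i : ℚ) = (m : ℚ)) → c m = 0)
    (hd : p.natDegree < 2) :
    ∃ B T : ℕ, 1 ≤ T ∧ ∀ m, B ≤ m → c (m + T) = c m := by
  classical
  -- helper: c determined by the predicate
  have hc : ∀ m m' : ℕ, ((∃ i : ℕ, p.eval (i : ℚ) = (m : ℚ)) ↔ (∃ i : ℕ, p.eval (i : ℚ) = (m' : ℚ))) → c m = c m' := by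
    intro m m' h
    by_cases hm : ∃ i : ℕ, p.eval (i : ℚ) = (m : ℚ)
    · rw [hc1 m hm, hc1 m' (h.mp hm)]
    · rw [hc0 m hm, hc0 m' (fun h' => hm (h.mpr h'))]
  have hle : p.natDegree ≤ 1 := by omega
  have hrep := Polynomial.eq_X_add_C_of_natDegree_le_one hle
  set a : ℚ := p.coeff 1 with ha
  set b : ℚ := p.coeff 0 with hb
  have heval : ∀ x : ℚ, p.eval x = a * x + b := by
    intro x; conv_lhs => rw [hrep]
    simp
  obtain ⟨m0, hm0⟩ := hp 0
  have hb0 : b = (m0 : ℚ) := by rw [← hm0, heval]; ring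
  by_cases hA : a = 0
  · -- constant
    refine ⟨m0 + 1, 1, le_refl _, fun m hm => ?_⟩
    apply hc
    constructor
    · rintro ⟨i, hi⟩
      rw [heval, hA, hb0] at hi
      exfalso
      have h2 : (m0 : ℚ) = ((m + 1 : ℕ) : ℚ) := by push_cast at hi ⊢; linarith
      have : m0 = m + 1 := Nat.cast_injective h2
      omega
    · rintro ⟨i, hi⟩
      rw [heval, hA, hb0] at hi
      exfalso
      have h2 : (m0 : ℚ) = (m : ℚ) := by push_cast at hi ⊢; linarith
      have : m0 = m := Nat.cast_injective h2
      omega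
  · -- linear; a > 0
    have hapos : 0 < a := by
      rcases lt_or_gt_of_ne hA with h | h
      · exfalso
        obtain ⟨n, hn⟩ := exists_nat_gt ((b + 1) / (-a))
        obtain ⟨m, hm⟩ := hp n
        have : p.eval (n : ℚ) < 0 := by
          rw [heval]
          have h1 : (b+1) / (-a) < n := hn
          have h2 : 0 < -a := by linarith
          have := (div_lt_iff₀ h2).mp h1
          nlinarith
        rw [hm] at this
        have : (0:ℚ) ≤ (m:ℚ) := Nat.cast_nonneg m
        linarith
      · exact h
    obtain ⟨m1, hm1⟩ := hp 1
    have hm1v : (m1 : ℚ) = a + b := by rw [← hm1, heval]; simp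
    have hm01 : m0 < m1 := by
      have : (m0 : ℚ) < (m1 : ℚ) := by rw [hm1v, hb0] at *; nlinarith [hb0]
      exact_mod_cast this
    set T := m1 - m0 with hT
    have hTv : (T : ℚ) = a := by
      have : ((m1 - m0 : ℕ) : ℚ) = (m1 : ℚ) - (m0 : ℚ) := by
        rw [Nat.cast_sub hm01.le]
      rw [hT, this, hm1v, hb0]; ring
    refine ⟨m0, T, by omega, fun m hm => ?_⟩
    apply hc
    constructor
    · rintro ⟨i, hi⟩
      refine ⟨i - 1, ?_⟩
      have hi1 : 1 ≤ i := by
        by_contra h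
        have : i = 0 := by omega
        rw [this] at hi
        rw [heval] at hi
        simp at hi
        rw [hb0] at hi
        have h2 : (m0:ℚ) = ((m + T:ℕ):ℚ) := by push_cast at hi ⊢; linarith
        have : m0 = m + T := Nat.cast_injective h2
        omega
      have hcast : ((i - 1 : ℕ) : ℚ) = (i : ℚ) - 1 := by rw [Nat.cast_sub hi1]; simp
      rw [heval, hcast]
      rw [heval] at hi
      have hmT : ((m + T : ℕ) : ℚ) = (m : ℚ) + (T : ℚ) := by push_cast; ring
      rw [hmT] at hi
      rw [hTv] at hi
      linarith
    · rintro ⟨i, hi⟩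
      refine ⟨i + 1, ?_⟩
      rw [heval] at hi ⊢
      push_cast
      rw [hTv]
      linarith
  -- done


section
variable (p : Polynomial ℚ) (hp : ∀ n : ℕ, ∃ m : ℕ, p.eval (n : ℚ) = (m : ℚ))
  (k : ℕ) (hk : 2 ≤ k) (c : ℕ → Fin 2)
  (hc1 : ∀ m : ℕ, (∃ i : ℕ, p.eval (i : ℚ) = (m : ℚ)) → c m = 1)
  (hc0 : ∀ m : ℕ, (¬ ∃ i : ℕ, p.eval (i : ℚ) = (m : ℚ)) → c m = 0)


include hp hk hc1 hc0 in
lemma hard_dir (hd : 2 ≤ p.natDegree) (hA : IsQAutomatic k c) : False := by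
  classical
  set P : ℕ → ℕ := fun n => (hp n).choose with hPdef
  have hPe : ∀ n : ℕ, p.eval (n : ℚ) = (P n : ℚ) := fun n => (hp n).choose_spec
  have hcS : ∀ m : ℕ, c m = 1 ↔ (∃ i : ℕ, p.eval (i : ℚ) = (m : ℚ)) := by
    intro m
    constructor
    · intro h
      by_contra hn
      rw [hc0 m hn] at h
      exact absurd h (by decide)
    · exact hc1 m
  have hk1 : 1 < k := hk
  have hkt : ∀ t : ℕ, 1 ≤ k ^ t := fun t => Nat.one_le_pow _ _ (by omega)
  -- leading coefficient positive
  have hp0 : p ≠ 0 := fun h => by rw [h] at hd; simp at hd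
  have hdegpos : 0 < p.degree := natDegree_pos_iff_degree_pos.mp (by omega)
  have hlead : 0 < p.leadingCoeff := by
    rcases lt_trichotomy p.leadingCoeff 0 with h | h | h
    · exfalso
      have hdeg' : 0 < (-p).degree := by rwa [degree_neg]
      have hlc' : 0 ≤ (-p).leadingCoeff := by rw [leadingCoeff_neg]; linarith
      obtain ⟨N, hN⟩ := ev_ge (-p) hdeg' hlc' 1
      have h1 := hN N le_rfl
      rw [eval_neg] at h1
      have h2 := hPe N
      have h3 : (0:ℚ) ≤ (P N : ℚ) := Nat.cast_nonneg _
      linarith [h2 ▸ h3]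
    · exact absurd h (leadingCoeff_ne_zero.mpr hp0)
    · exact h
  obtain ⟨hqd, hqlc⟩ := diff_poly_facts p hd
  set q : Polynomial ℚ := (taylor (1:ℚ)) p - p with hqdef
  have hqe : ∀ x : ℚ, q.eval x = p.eval (x + 1) - p.eval x := by
    intro x
    rw [hqdef, eval_sub, taylor_apply, eval_comp, eval_add, eval_X, eval_C]
  have hqeP : ∀ n : ℕ, q.eval (n : ℚ) = (P (n+1) : ℚ) - (P n : ℚ) := by
    intro n
    rw [hqe, ← hPe n, ← hPe (n+1)]
    push_cast
    ring
  have hqlead : 0 < q.leadingCoeff := by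
    rw [hqlc]
    have : (0:ℚ) < (p.natDegree : ℚ) := by exact_mod_cast (by omega : 0 < p.natDegree)
    positivity
  have hqdeg : 0 < q.degree := by
    apply natDegree_pos_iff_degree_pos.mp
    omega
  -- eventual monotonicity
  obtain ⟨J1, hJ1⟩ := ev_ge q hqdeg hqlead.le 1
  have hmono : ∀ i, J1 ≤ i → P i < P (i+1) := by
    intro i hi
    have h1 := hJ1 i hi
    rw [hqeP] at h1
    have : (P i : ℚ) < (P (i+1) : ℚ) := by linarith
    exact_mod_cast this
  have hmono2 : ∀ a b, J1 ≤ a → a ≤ b → P a ≤ P b := by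
    intro a b ha hab
    induction b, hab using Nat.le_induction with
    | base => exact le_rfl
    | succ b hb ih => exact le_trans ih (hmono b (le_trans ha hb)).le
  have hgrow : ∀ J C : ℕ, J1 ≤ J → ∃ i, J ≤ i ∧ C ≤ P i := by
    intro J C hJ
    have haux : ∀ n : ℕ, n ≤ P (J + n) := by
      intro n
      induction n with
      | zero => omega
      | succ n ih =>
        have h1 := hmono (J + n) (by omega)
        have h2 : P (J + (n+1)) = P ((J+n)+1) := rfl
        omega
    exact ⟨J + C, by omega, haux C⟩
  -- E2 : relative gap smallness
  have hE2 : ∀ y : ℕ, ∃ J, ∀ i : ℕ, J ≤ i → (y:ℚ) * q.eval (i:ℚ) ≤ p.eval (i:ℚ) := by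
    intro y
    set h : Polynomial ℚ := p - C (y:ℚ) * q with hhdef
    have hqcd : q.coeff p.natDegree = 0 :=
      coeff_eq_zero_of_natDegree_lt (by omega)
    have hcd : h.coeff p.natDegree = p.leadingCoeff := by
      rw [hhdef, coeff_sub, coeff_C_mul, hqcd, mul_zero, sub_zero]
      rfl
    have hhle : h.natDegree ≤ p.natDegree := by
      apply le_trans (natDegree_sub_le _ _)
      have h1 : (C (y:ℚ) * q).natDegree ≤ p.natDegree := by
        apply le_trans (natDegree_mul_le)
        rw [natDegree_C]
        omega
      omega
    have hhdeg : h.natDegree = p.natDegree := by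
      refine le_antisymm hhle (le_natDegree_of_ne_zero ?_)
      rw [hcd]
      exact ne_of_gt hlead
    have hhlc : h.leadingCoeff = p.leadingCoeff := by
      rw [Polynomial.leadingCoeff, hhdeg, hcd]
    have hhdegpos : 0 < h.degree := natDegree_pos_iff_degree_pos.mp (by omega)
    obtain ⟨N, hN⟩ := ev_ge h hhdegpos (by rw [hhlc]; exact hlead.le) 0
    refine ⟨N, fun i hi => ?_⟩
    have := hN i hi
    rw [hhdef, eval_sub, eval_mul, eval_C] at this
    linarith
  -- kernel machinery
  set K : Set (ℕ → Fin 2) :=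
    {s : ℕ → Fin 2 | ∃ t r : ℕ, r < k ^ t ∧ s = fun n => c (k ^ t * n + r)} with hKdef
  have hKfin : K.Finite := hA
  haveI : Finite (↥K) := hKfin.to_subtype
  set E : ℕ → (↥K → Fin 2) := fun y g => (g : ℕ → Fin 2) y with hEdef
  set W : ℕ → ℕ → Prop := fun t y => ∃ r, r < k ^ t ∧ c (k ^ t * y + r) = 1 with hWdef
  have hW : ∀ t y1 y2, E y1 = E y2 → W t y1 → W t y2 := by
    intro t y1 y2 hEq hw
    obtain ⟨r, hr, h1⟩ := hw
    refine ⟨r, hr, ?_⟩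
    have hgK : (fun n => c (k ^ t * n + r)) ∈ K := ⟨t, r, hr, rfl⟩
    have h2 := congrFun hEq ⟨_, hgK⟩
    simp only [hEdef] at h2
    have h3 : c (k ^ t * y1 + r) = c (k ^ t * y2 + r) := h2
    rw [← h3]
    exact h1
  -- Step 1
  have hStep1 : ∀ y : ℕ, ∃ T, ∀ t, T ≤ t → W t y := by
    intro y
    rcases Nat.eq_zero_or_pos y with rfl | hy
    · obtain ⟨T, hT⟩ := pow_unbounded_of_one_lt (P 0) hk1
      refine ⟨T, fun t ht => ⟨P 0, ?_, ?_⟩⟩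
      · exact lt_of_lt_of_le hT (Nat.pow_le_pow_right (by omega) ht)
      · have : k ^ t * 0 + P 0 = P 0 := by ring
        rw [this]
        exact hc1 (P 0) ⟨0, hPe 0⟩
    · obtain ⟨J2, hJ2⟩ := hE2 y
      set J := max J1 J2 with hJdef
      obtain ⟨T, hT⟩ := pow_unbounded_of_one_lt (P (J+1)) hk1
      refine ⟨T, fun t ht => ?_⟩
      have hkt' : P (J+1) < k ^ t :=
        lt_of_lt_of_le hT (Nat.pow_le_pow_right (by omega) ht)
      have hexi : ∃ i, J ≤ i ∧ y * k ^ t ≤ P i := hgrow J (y * k ^ t) (le_max_left _ _)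
      obtain ⟨i, hJi, hyi, hmin⟩ : ∃ i, J ≤ i ∧ y * k ^ t ≤ P i ∧
          ∀ j < i, ¬(J ≤ j ∧ y * k ^ t ≤ P j) := by
        refine ⟨Nat.find hexi, (Nat.find_spec hexi).1, (Nat.find_spec hexi).2,
          fun j hj => Nat.find_min hexi hj⟩
      have hktle : k ^ t ≤ y * k ^ t := Nat.le_mul_of_pos_left _ hy
      have hPJ1 : P (J+1) < y * k ^ t := lt_of_lt_of_le hkt' hktle
      have hPJ : P J < y * k ^ t :=
        lt_of_le_of_lt (hmono2 J (J+1) (by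
          have := le_max_left J1 J2
          omega) (by omega)) hPJ1
      have hiJ2 : J + 2 ≤ i := by
        by_contra hcon
        have : i = J ∨ i = J + 1 := by omega
        rcases this with rfl | rfl
        · omega
        · omega
      have hmin' : P (i-1) < y * k ^ t := by
        have h1 := hmin (i-1) (by omega)
        push_neg at h1
        exact h1 (by omega)
      -- bound q.eval (i-1)
      have hqlt : q.eval ((i-1 : ℕ) : ℚ) < (k ^ t : ℕ) := by
        have hJ2i : J2 ≤ i - 1 := by
          have := le_max_right J1 J2
          omega
        have h1 := hJ2 (i-1) hJ2i
        have h2 : (P (i-1) : ℚ) < ((y * k ^ t : ℕ) : ℚ) := by exact_mod_cast hmin'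
        rw [← hPe] at h2
        have hy' : (0:ℚ) < (y:ℚ) := by exact_mod_cast hy
        push_cast at h2 ⊢
        nlinarith
      have hPlt : P i < (y+1) * k ^ t := by
        have h1 : (P i : ℚ) < ((y+1) * k ^ t : ℕ) := by
          have h2 := hqeP (i-1)
          have h3 : i - 1 + 1 = i := by omega
          rw [h3] at h2
          have h4 : (P (i-1) : ℚ) < ((y * k ^ t : ℕ) : ℚ) := by exact_mod_cast hmin'
          push_cast at h2 h4 hqlt ⊢
          linarith
        exact_mod_cast h1
      have hsplit : (y+1) * k ^ t = y * k ^ t + k ^ t := by ring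
      refine ⟨P i - y * k ^ t, by omega, ?_⟩
      have heq : k ^ t * y + (P i - y * k ^ t) = P i := by
        rw [mul_comm]
        omega
      rw [heq]
      exact hc1 (P i) ⟨i, hPe i⟩
  -- Step 2 : uniform threshold
  have hFex : ∀ v : (↥K → Fin 2), ∃ T, ∀ y, E y = v → ∀ t, T ≤ t → W t y := by
    intro v
    by_cases hv : ∃ y, E y = v
    · obtain ⟨y0, hy0⟩ := hv
      obtain ⟨T, hT⟩ := hStep1 y0
      exact ⟨T, fun y hy t ht => hW t y0 y (hy0.trans hy.symm) (hT t ht)⟩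
    · exact ⟨0, fun y hy => absurd ⟨y, hy⟩ hv⟩
  choose F hF using hFex
  obtain ⟨Tstar, hTs⟩ := (Set.finite_range F).bddAbove
  have hAll : ∀ y t, Tstar ≤ t → W t y := by
    intro y t ht
    exact hF (E y) y rfl t (le_trans (hTs (Set.mem_range_self (E y))) ht)
  -- Step 3 : contradiction with growing gaps
  set κ := k ^ Tstar with hκdef
  have hκ1 : 1 ≤ κ := hkt Tstar
  obtain ⟨J3, hJ3⟩ := ev_ge q hqdeg hqlead.le ((2 * κ + 2 : ℕ) : ℚ)
  set B0 := (Finset.range (J1 + 1)).sup P with hB0def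
  have hB0 : ∀ j, j ≤ J1 → P j ≤ B0 := by
    intro j hj
    exact Finset.le_sup (Finset.mem_range.mpr (by omega))
  obtain ⟨i, hJmi, hB0i⟩ := hgrow (max J1 J3) B0 (le_max_left _ _)
  set x := P i with hxdef
  obtain ⟨r, hr, hcr⟩ := hAll (x / κ + 1) Tstar le_rfl
  obtain ⟨j, hj⟩ := (hcS _).mp hcr
  set s := κ * (x / κ + 1) + r with hsdef
  have hsj : P j = s := by
    have := hPe j
    rw [hj] at this
    exact_mod_cast this.symm
  have hdiv := Nat.div_add_mod x κ
  have hmodlt : x % κ < κ := Nat.mod_lt _ (by omega)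
  have hxs : x < s := by
    have : κ * (x / κ + 1) = κ * (x / κ) + κ := by ring
    omega
  have hsx : s < x + 2 * κ := by
    have : κ * (x / κ + 1) = κ * (x / κ) + κ := by ring
    omega
  have hPi1 : x + 2 * κ + 2 ≤ P (i + 1) := by
    have h1 := hJ3 i (by omega)
    have h2 := hqeP i
    have h3 : ((x + 2 * κ + 2 : ℕ) : ℚ) ≤ ((P (i+1) : ℕ) : ℚ) := by
      push_cast at h1 h2 ⊢
      rw [h2] at h1
      have hx' : ((x : ℕ) : ℚ) = ((P i : ℕ) : ℚ) := by rw [hxdef]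
      push_cast at hx'
      linarith
    exact_mod_cast h3
  have hJ1i : J1 ≤ i := le_trans (le_max_left _ _) hJmi
  rcases Nat.lt_or_ge i j with hij | hij
  · -- j ≥ i + 1 : P j ≥ P (i+1) > s
    have h1 : P (i+1) ≤ P j := hmono2 (i+1) j (by omega) (by omega)
    omega
  · -- j ≤ i : P j ≤ x < s
    have h1 : P j ≤ x := by
      rcases Nat.lt_or_ge j J1 with h2 | h2
      · exact le_trans (hB0 j (by omega)) hB0i
      · exact hmono2 j i h2 hij
    omega

end

theorem char_seq_of_polynomial_values_automatic_iff_deg_lt_two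
    (p : Polynomial ℚ) (hp : ∀ n : ℕ, ∃ m : ℕ, p.eval (n : ℚ) = (m : ℚ))
    (k : ℕ) (hk : 2 ≤ k) (c : ℕ → Fin 2)
    (hc1 : ∀ m : ℕ, (∃ i : ℕ, p.eval (i : ℚ) = (m : ℚ)) → c m = 1)
    (hc0 : ∀ m : ℕ, (¬ ∃ i : ℕ, p.eval (i : ℚ) = (m : ℚ)) → c m = 0) :
    IsQAutomatic k c ↔ p.natDegree < 2 := by
  constructor
  · intro hA
    by_contra hcon
    push_neg at hcon
    exact (hard_dir p hp k hk c hc1 hc0 hcon hA).elim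
  · intro hd
    obtain ⟨B, T, hT, hper⟩ := easy_dir p hp c hc1 hc0 hd
    exact evper_automatic k T B hT c hper
end

section
/- Let k ≥ 2 and let a = (a_n)_{n ≥ 0} be a k-automatic sequence with values in a finite alphabet. Let b be a value occurring infinitely often in a, and suppose that the frequency of occurrences of b in a is zero, i.e., lim_{N → ∞} (1/N)·#{n < N : a_n = b} = 0. Letting α_j denote the index of the j-th occurrence of b in a, one has limsup_{j → ∞} α_{j+1}/α_j > 1. -/
theorem minsky_papert
    {A : Type*} [Fintype A] (k : ℕ) (hk : 2 ≤ k) (a : ℕ → A)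
    (ha : IsQAutomatic k a) (b : A)
    (α : ℕ → ℕ) (hmono : StrictMono α) (hocc : ∀ j, a (α j) = b)
    (hall : ∀ n, a n = b → ∃ j, α j = n)
    (hfreq : Filter.Tendsto
      (fun N : ℕ => (Set.ncard {n : ℕ | n < N ∧ a n = b} : ℝ) / N)
      Filter.atTop (nhds 0)) :
    ∃ c : ℝ, 1 < c ∧ ∃ᶠ j in Filter.atTop, c * (α j : ℝ) ≤ (α (j + 1) : ℝ) := by
  by_contra hcon
  push_neg at hcon
  -- Step 1: for every ε > 0, eventually every interval (x, (1+ε)x) contains some α j.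
  have step1 : ∀ ε : ℝ, 0 < ε → ∃ X : ℕ, ∀ x : ℕ, X ≤ x →
      ∃ j : ℕ, x < α j ∧ (α j : ℝ) < (1 + ε) * x := by
    intro ε hε
    have hc := hcon (1 + ε) (by linarith)
    simp only [← not_le] at hc
    obtain ⟨J, hJ⟩ := Filter.eventually_atTop.mp hc
    refine ⟨α J, fun x hx => ?_⟩
    have hex : ∃ j, x < α j :=
      ⟨x + 1, lt_of_lt_of_le (Nat.lt_succ_self x) (hmono.le_apply)⟩
    set jf := Nat.find hex with hjf
    have hfind : x < α jf := Nat.find_spec hex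
    have hJlt : J < jf := by
      by_contra hle
      push_neg at hle
      have : α jf ≤ α J := hmono.monotone hle
      omega
    have hmin : ¬ x < α (jf - 1) := Nat.find_min hex (by omega)
    push_neg at hmin
    have h3 := hJ (jf - 1) (by omega)
    push_neg at h3
    have hstep : jf - 1 + 1 = jf := by omega
    rw [hstep] at h3
    refine ⟨jf, hfind, lt_of_lt_of_le h3 ?_⟩
    have hle : ((α (jf - 1) : ℝ)) ≤ (x : ℝ) := Nat.cast_le.mpr hmin
    nlinarith
  -- Step 2: for every B there is a scale m such that every block
  -- [k^m * n, k^m * (n+1)) with 1 ≤ n ≤ B contains an occurrence of b.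
  have step2 : ∀ B : ℕ, ∃ m : ℕ, ∀ n : ℕ, 1 ≤ n → n ≤ B →
      ∃ r, r < k ^ m ∧ a (k ^ m * n + r) = b := by
    intro B
    rcases Nat.eq_zero_or_pos B with hB | hB
    · exact ⟨0, fun n h1 h2 => by omega⟩
    have hB0 : (0 : ℝ) < B := by exact_mod_cast hB
    obtain ⟨X, hX⟩ := step1 (1 / B) (by positivity)
    refine ⟨X, fun n h1 h2 => ?_⟩
    have hpow : X ≤ k ^ X := le_of_lt (Nat.lt_pow_self (n := X) (by omega))
    have hxX : X ≤ k ^ X * n := le_trans hpow (Nat.le_mul_of_pos_right _ h1)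
    obtain ⟨j, hj1, hj2⟩ := hX (k ^ X * n) hxX
    have hlt : α j < k ^ X * n + k ^ X := by
      have hnB : (n : ℝ) ≤ B := Nat.cast_le.mpr h2
      have hkX : (0 : ℝ) < (k ^ X : ℕ) := by
        have : 0 < k ^ X := pow_pos (by omega) X
        exact_mod_cast this
      have hbound : (1 + 1 / (B : ℝ)) * ((k ^ X * n : ℕ) : ℝ)
          ≤ ((k ^ X * n : ℕ) : ℝ) + ((k ^ X : ℕ) : ℝ) := by
        push_cast
        have h5 : ((k : ℝ) ^ X) * n / B ≤ (k : ℝ) ^ X := by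
          rw [div_le_iff₀ hB0]
          have : ((k : ℝ) ^ X) * n ≤ ((k : ℝ) ^ X) * B :=
            mul_le_mul_of_nonneg_left hnB (by positivity)
          linarith
        have hcast : (0:ℝ) < (k:ℝ) ^ X := by positivity
        rw [add_mul, one_mul]
        have : 1 / (B : ℝ) * ((k:ℝ) ^ X * n) = (k:ℝ) ^ X * n / B := by ring
        rw [this]
        linarith
      have : (α j : ℝ) < ((k ^ X * n + k ^ X : ℕ) : ℝ) := by
        push_cast at hbound hj2 ⊢
        linarith
      exact_mod_cast this
    refine ⟨α j - k ^ X * n, by omega, ?_⟩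
    rw [Nat.add_sub_cancel' (le_of_lt hj1)]
    exact hocc j
  -- Step 3: pigeonhole over subsets of the (finite) kernel gives a single scale m0
  -- such that every block at scale m0 (with index ≥ 1) contains an occurrence of b.
  set S₀ := {s : ℕ → A | ∃ k' r' : ℕ, r' < k ^ k' ∧ s = fun n => a (k ^ k' * n + r')}
    with hS₀
  have haS : S₀.Finite := ha
  set F : ℕ → Set (ℕ → A) :=
    fun m => {s | ∃ r', r' < k ^ m ∧ s = fun n => a (k ^ m * n + r')} with hFdef
  have hF : ∀ m, F m ⊆ S₀ := by
    rintro m s ⟨r', h1, h2⟩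
    exact ⟨m, r', h1, h2⟩
  haveI : Finite ↥{t : Set (ℕ → A) | t ⊆ S₀} := (haS.finite_subsets).to_subtype
  choose g hg using step2
  let f : ℕ → ↥{t : Set (ℕ → A) | t ⊆ S₀} := fun B => ⟨F (g B), hF (g B)⟩
  obtain ⟨y, hy⟩ := Finite.exists_infinite_fiber f
  have hyinf : (f ⁻¹' {y}).Infinite := Set.infinite_coe_iff.mp hy
  obtain ⟨B₀, hB₀⟩ := hyinf.nonempty
  have key : ∀ n : ℕ, 1 ≤ n → ∃ r, r < k ^ (g B₀) ∧ a (k ^ (g B₀) * n + r) = b := by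
    intro n hn
    obtain ⟨B, hBmem, hBn⟩ := hyinf.exists_gt n
    have hFeq : F (g B) = F (g B₀) := by
      have h1 : f B = y := hBmem
      have h2 : f B₀ = y := hB₀
      have h3 : f B = f B₀ := h1.trans h2.symm
      exact congrArg Subtype.val h3
    obtain ⟨r, hr, ha'⟩ := hg B n hn (le_of_lt hBn)
    have hmem : (fun n' => a (k ^ (g B) * n' + r)) ∈ F (g B) := ⟨r, hr, rfl⟩
    rw [hFeq] at hmem
    obtain ⟨r', hr', heq⟩ := hmem
    refine ⟨r', hr', ?_⟩
    rw [← congrFun heq n]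
    exact ha'
  -- Step 4: positive lower density, contradicting hfreq.
  set M := k ^ (g B₀) with hMdef
  have hM : 0 < M := pow_pos (by omega) _
  have hsel : ∀ n : ℕ, ∃ r, 1 ≤ n → r < M ∧ a (M * n + r) = b := by
    intro n
    by_cases hn : 1 ≤ n
    · obtain ⟨r, h1, h2⟩ := key n hn
      exact ⟨r, fun _ => ⟨h1, h2⟩⟩
    · exact ⟨0, fun h => absurd h hn⟩
  choose ρ hρ using hsel
  have count : ∀ N : ℕ, N / M - 1 ≤ Set.ncard {n : ℕ | n < N ∧ a n = b} := by
    intro N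
    set Q := N / M with hQdef
    have hinj : Set.InjOn (fun n => M * n + ρ n) ↑(Finset.Ico 1 Q) := by
      intro n hn n' hn' heq
      simp only [Finset.coe_Ico, Set.mem_Ico] at hn hn'
      have h1 := (hρ n hn.1).1
      have h2 := (hρ n' hn'.1).1
      have e1 : (M * n + ρ n) / M = n := by
        rw [Nat.mul_add_div hM, Nat.div_eq_of_lt h1]; omega
      have e2 : (M * n' + ρ n') / M = n' := by
        rw [Nat.mul_add_div hM, Nat.div_eq_of_lt h2]; omega
      simp only at heq
      rw [← e1, ← e2, heq]
    have hcard : ((Finset.Ico 1 Q).image fun n => M * n + ρ n).card = Q - 1 := by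
      rw [Finset.card_image_of_injOn hinj, Nat.card_Ico]
    have hsub : ↑((Finset.Ico 1 Q).image fun n => M * n + ρ n)
        ⊆ {n : ℕ | n < N ∧ a n = b} := by
      intro x hx
      simp only [Finset.coe_image, Finset.coe_Ico, Set.mem_image, Set.mem_Ico] at hx
      obtain ⟨n, ⟨hn1, hn2⟩, rfl⟩ := hx
      obtain ⟨h1, h2⟩ := hρ n hn1
      refine ⟨?_, h2⟩
      calc M * n + ρ n < M * n + M := by omega
        _ = M * (n + 1) := (Nat.mul_succ M n).symm
        _ ≤ M * Q := Nat.mul_le_mul_left M hn2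
        _ = Q * M := Nat.mul_comm M Q
        _ ≤ N := Nat.div_mul_le_self N M
    calc Q - 1 = ((Finset.Ico 1 Q).image fun n => M * n + ρ n).card := hcard.symm
      _ = (↑((Finset.Ico 1 Q).image fun n => M * n + ρ n) : Set ℕ).ncard :=
          (Set.ncard_coe_finset _).symm
      _ ≤ Set.ncard {n : ℕ | n < N ∧ a n = b} :=
          Set.ncard_le_ncard hsub ((Set.finite_Iio N).subset (fun x hx => hx.1))
  have hMR : (1 : ℝ) ≤ (M : ℝ) := by exact_mod_cast hM
  have hev1 : ∀ᶠ N : ℕ in Filter.atTop,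
      (Set.ncard {n : ℕ | n < N ∧ a n = b} : ℝ) / N < 1 / (2 * M) :=
    hfreq.eventually_lt_const (by positivity)
  obtain ⟨N, hN1, hN2⟩ := (hev1.and (Filter.eventually_ge_atTop (4 * M))).exists
  set Q := N / M with hQdef
  have hQ4 : 4 ≤ Q := (Nat.le_div_iff_mul_le hM).mpr hN2
  have hπ : Q - 1 ≤ Set.ncard {n : ℕ | n < N ∧ a n = b} := count N
  have hNQ : N < M * Q + M := by
    have h1 : M * Q + N % M = N := Nat.div_add_mod N M
    have h2 : N % M < M := Nat.mod_lt N hM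
    calc N = M * Q + N % M := h1.symm
      _ < M * Q + M := Nat.add_lt_add_left h2 _
  have hN4 : 4 ≤ N := by
    have : 4 ≤ 4 * M := by omega
    omega
  have hN0 : (0 : ℝ) < N := by
    have : (0:ℕ) < N := by omega
    exact_mod_cast this
  have hπR : ((Q : ℝ) - 1) ≤ (Set.ncard {n : ℕ | n < N ∧ a n = b} : ℝ) := by
    have hc := (Nat.cast_le (α := ℝ)).mpr hπ
    rwa [Nat.cast_sub (by omega), Nat.cast_one] at hc
  have hMQ : (N : ℝ) < (M : ℝ) * Q + M := by exact_mod_cast hNQ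
  have hQR : (4 : ℝ) ≤ (Q : ℝ) := by exact_mod_cast hQ4
  have hNR : 4 * (M : ℝ) ≤ (N : ℝ) := by exact_mod_cast hN2
  have key2 : (N : ℝ) < 2 * M * ((Q : ℝ) - 1) := by nlinarith
  have hfinal : 1 / (2 * (M : ℝ)) < (Set.ncard {n : ℕ | n < N ∧ a n = b} : ℝ) / N := by
    rw [div_lt_div_iff₀ (by positivity) hN0]
    nlinarith
  linarith
end

section
/- Let q ≥ 2 and let a = (a_n)_{n ≥ 0} be a q-automatic sequence with values in a finite alphabet. Suppose a has arbitrarily long runs: for every L ≥ 1 there exist m and a value b with a_m = a_{m+1} = ⋯ = a_{m+L−1} = b. Then there exist a value b and a constant c > 0 such that for infinitely many positive integers x one has a_n = b for all integers n with x ≤ n ≤ (1+c)·x. -/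
theorem schlage_puchta_runs
    {A : Type*} [Fintype A] (q : ℕ) (hq : 2 ≤ q) (a : ℕ → A)
    (ha : IsQAutomatic q a)
    (hruns : ∀ L : ℕ, 1 ≤ L → ∃ m : ℕ, ∃ b : A, ∀ i < L, a (m + i) = b) :
    ∃ b : A, ∃ c : ℝ, 0 < c ∧
      {x : ℕ | 0 < x ∧ ∀ n : ℕ, x ≤ n → (n : ℝ) ≤ (1 + c) * x → a n = b}.Infinite := by
  classical
  have hq0 : 0 < q := by omega
  -- Step 1: aligned constant blocks at every level k
  have key1 : ∀ k : ℕ, ∃ t : ℕ, ∃ b : A, 1 ≤ t ∧ ∀ r < q ^ k, a (q ^ k * t + r) = b := by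
    intro k
    have hQ : 0 < q ^ k := pow_pos hq0 k
    obtain ⟨m, b, hm⟩ := hruns (2 * q ^ k) (by omega)
    refine ⟨m / q ^ k + 1, b, Nat.le_add_left 1 _, fun r hr => ?_⟩
    have B1 : m ≤ q ^ k * (m / q ^ k + 1) := by
      rw [mul_comm]
      exact ((Nat.div_lt_iff_lt_mul hQ).mp (Nat.lt_succ_self _)).le
    have B2 : q ^ k * (m / q ^ k + 1) ≤ m + q ^ k := by
      rw [Nat.mul_add, Nat.mul_one, mul_comm]
      exact Nat.add_le_add_right (Nat.div_mul_le_self m _) _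
    have hsum : m + (q ^ k * (m / q ^ k + 1) + r - m) = q ^ k * (m / q ^ k + 1) + r := by
      omega
    rw [← hsum]
    exact hm _ (by omega)
  choose tf bf htf hab using key1
  -- Step 2: pigeonhole over (value, level-k kernel slice)
  set Kset : Set (ℕ → A) :=
    {s : ℕ → A | ∃ k r : ℕ, r < q ^ k ∧ s = fun n => a (q ^ k * n + r)} with hKset
  have haK : Kset.Finite := ha
  set Dset : ℕ → Set (ℕ → A) := fun k =>
    {s | ∃ r : ℕ, r < q ^ k ∧ s = fun n => a (q ^ k * n + r)} with hDset
  have hDsub : ∀ k, Dset k ⊆ Kset := by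
    rintro k s ⟨r, hr, rfl⟩; exact ⟨k, r, hr, rfl⟩
  haveI : Finite {D : Set (ℕ → A) // D ⊆ Kset} := haK.finite_subsets.to_subtype
  set F : ℕ → A × {D : Set (ℕ → A) // D ⊆ Kset} := fun k => (bf k, ⟨Dset k, hDsub k⟩) with hF
  obtain ⟨⟨b, D⟩, hp⟩ := Finite.exists_infinite_fiber F
  have hS : (F ⁻¹' {(b, D)}).Infinite := Set.infinite_coe_iff.mp hp
  obtain ⟨k0, hk0⟩ := hS.nonempty
  set t := tf k0 with htdef
  have ht : 1 ≤ t := htf k0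
  have hk0' : F k0 = (b, D) := hk0
  -- Key: for all good k, the block [q^k t, q^k (t+1)) is constant b
  have hkey : ∀ k ∈ F ⁻¹' {(b, D)}, ∀ r, r < q ^ k → a (q ^ k * t + r) = b := by
    intro k hk r hr
    have hk' : F k = (b, D) := hk
    have hDk : Dset k = Dset k0 := by
      have h1 : (⟨Dset k, hDsub k⟩ : {D : Set (ℕ → A) // D ⊆ Kset}) = D :=
        congrArg Prod.snd hk'
      have h2 : (⟨Dset k0, hDsub k0⟩ : {D : Set (ℕ → A) // D ⊆ Kset}) = D :=
        congrArg Prod.snd hk0'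
      have := h1.trans h2.symm
      exact congrArg Subtype.val this
    have hmem : (fun n => a (q ^ k * n + r)) ∈ Dset k0 := by
      rw [← hDk]; exact ⟨r, hr, rfl⟩
    obtain ⟨r0, hr0, heq⟩ := hmem
    have hb0 : bf k0 = b := congrArg Prod.fst hk0'
    calc a (q ^ k * t + r) = (fun n => a (q ^ k * n + r)) t := rfl
      _ = a (q ^ k0 * t + r0) := by rw [heq]
      _ = bf k0 := hab k0 r0 hr0
      _ = b := hb0
  -- Step 3: conclude with c = 1/(2t)
  have ht' : (0 : ℝ) < (t : ℝ) := by exact_mod_cast (by omega : 0 < t)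
  refine ⟨b, 1 / (2 * (t : ℝ)), div_pos one_pos (by linarith), ?_⟩
  have hinj : Set.InjOn (fun k => q ^ k * t) (F ⁻¹' {(b, D)}) := by
    intro k1 _ k2 _ h
    simp only at h
    have h' := Nat.eq_of_mul_eq_mul_right (show 0 < t by omega) h
    exact Nat.pow_right_injective hq h'
  have hsub : (fun k => q ^ k * t) '' (F ⁻¹' {(b, D)}) ⊆
      {x : ℕ | 0 < x ∧ ∀ n : ℕ, x ≤ n →
        (n : ℝ) ≤ (1 + 1 / (2 * (t : ℝ))) * x → a n = b} := by
    rintro x ⟨k, hk, rfl⟩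
    have hQ : 0 < q ^ k := pow_pos hq0 k
    refine ⟨Nat.mul_pos hQ (by omega), fun n hn hn2 => ?_⟩
    have hQR : (0 : ℝ) < (q : ℝ) ^ k := by positivity
    have hcast : ((q ^ k * t : ℕ) : ℝ) = (q : ℝ) ^ k * (t : ℝ) := by push_cast; ring
    rw [hcast] at hn2
    have hexp : (1 + 1 / (2 * (t : ℝ))) * ((q : ℝ) ^ k * (t : ℝ)) =
        (q : ℝ) ^ k * (t : ℝ) + (q : ℝ) ^ k / 2 := by
      field_simp
    rw [hexp] at hn2
    have hnlt : (n : ℝ) < (q : ℝ) ^ k * (t : ℝ) + (q : ℝ) ^ k := by linarith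
    have hnlt' : n < q ^ k * t + q ^ k := by exact_mod_cast hnlt
    have hr : n - q ^ k * t < q ^ k := by omega
    have := hkey k hk (n - q ^ k * t) hr
    rwa [Nat.add_sub_cancel' hn] at this
  exact (hS.image hinj).mono hsub
end
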